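/- arXiv:1505.03312 — 6 statements merged into one kernel-verified Lean document; each statement's English description precedes it below -/
import Mathlib

section
/- Let (V,∘) be a Novikov algebra over ℂ and define a∗b = a∘b + b∘a for a,b ∈ V. Then ∗ is commutative and satisfies the Tortken identity (a∗b)∗(c∗d) − (a∗d)∗(c∗b) = (a,b,c)∗d − (a,d,c)∗b for all a,b,c,d ∈ V, where (x,y,z) denotes the associator x∗(y∗z) − (x∗y)∗z. -/
set_option maxSynthPendingDepth 3

namespace QLCA

variable {V : Type} [AddCommGroup V] [Module ℂ V]

/-- Bilinearity over `ℂ` of a binary product. -/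
def IsBilin (f : V → V → V) : Prop :=
  (∀ x y z : V, f (x + y) z = f x z + f y z) ∧
  (∀ x y z : V, f x (y + z) = f x y + f x z) ∧
  (∀ (c : ℂ) (x y : V), f (c • x) y = c • f x y) ∧
  (∀ (c : ℂ) (x y : V), f x (c • y) = c • f x y)

/-- `(V, f)` is a Novikov algebra over `ℂ`. -/
def IsNovikov (f : V → V → V) : Prop :=
  IsBilin f ∧
  (∀ a b c : V, f (f a b) c - f a (f b c) = f (f b a) c - f b (f a c)) ∧
  (∀ a b c : V, f (f a b) c = f (f a c) b)

/-- `I` is an ideal of the Novikov algebra `(V, f)`. -/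
def IsNovikovIdeal (f : V → V → V) (I : Submodule ℂ V) : Prop :=
  ∀ a ∈ I, ∀ b : V, f a b ∈ I ∧ f b a ∈ I

/-- The Novikov algebra `(V, f)` is simple. -/
def NovikovSimple (f : V → V → V) : Prop :=
  (∃ a b : V, f a b ≠ 0) ∧
  ∀ I : Submodule ℂ V, IsNovikovIdeal f I → I = ⊥ ∨ I = ⊤

/-- `(V, f)` is a Lie algebra over `ℂ`. -/
def IsLieBracket (f : V → V → V) : Prop :=
  IsBilin f ∧
  (∀ a b : V, f a b = - f b a) ∧
  (∀ a b c : V, f a (f b c) = f (f a b) c + f b (f a c))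

/-- The Gel'fand-Dorfman compatibility condition between a Novikov product and
a Lie bracket. -/
def GDcompat (mul lie : V → V → V) : Prop :=
  ∀ a b c : V,
    lie (mul a b) c - lie (mul a c) b + mul (lie a b) c - mul (lie a c) b
      - mul a (lie b c) = 0

/-- `(V, mul, lie)` is a Gel'fand-Dorfman bialgebra. -/
def IsGD (mul lie : V → V → V) : Prop :=
  IsNovikov mul ∧ IsLieBracket lie ∧ GDcompat mul lie

/-- `I` is a Gel'fand-Dorfman ideal of `(V, mul, lie)`. -/
def IsGDIdeal (mul lie : V → V → V) (I : Submodule ℂ V) : Prop :=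
  IsNovikovIdeal mul I ∧ ∀ a ∈ I, ∀ b : V, lie a b ∈ I ∧ lie b a ∈ I

/-- The symmetrized (Novikov-Jordan) product `a ∗ b = a∘b + b∘a`. -/
def sProd (mul : V → V → V) (a b : V) : V := mul a b + mul b a

/-- `I` is an ideal of the Novikov-Jordan algebra `(V, ∗)`. -/
def IsNJIdeal (mul : V → V → V) (I : Submodule ℂ V) : Prop :=
  ∀ a ∈ I, ∀ b : V, sProd mul a b ∈ I

/-- The Novikov-Jordan algebra `(V, ∗)` is simple. -/
def NJSimple (mul : V → V → V) : Prop :=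
  (∃ a b : V, sProd mul a b ≠ 0) ∧
  ∀ I : Submodule ℂ V, IsNJIdeal mul I → I = ⊥ ∨ I = ⊤

/-- An element of the free module `R = ℂ[∂]V`, recorded by its coefficients:
`a : Conf V` represents `∑ₘ ∂^m (a m)`. -/
abbrev Conf (V : Type) [Zero V] := ℕ →₀ V

/-- A polynomial in `λ` with coefficients in `R = ℂ[∂]V`: `P : LP V`
represents `∑ₙ λ^n (P n)`. -/
abbrev LP (V : Type) [Zero V] := ℕ →₀ (ℕ →₀ V)

/-- Multiplication by `∂` on `ℂ[∂]V`. -/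
noncomputable def Dop (a : Conf V) : Conf V := Finsupp.mapDomain (· + 1) a

/-- Multiplication by `λ` on `λ`-polynomials. -/
noncomputable def lmul (P : LP V) : LP V := Finsupp.mapDomain (· + 1) P

/-- Multiplication by `∂` on `λ`-polynomials. -/
noncomputable def dmul (P : LP V) : LP V := Finsupp.mapRange (Dop (V := V)) (by simp [Dop]) P

/-- Multiplication by `λ + ∂` on `λ`-polynomials. -/
noncomputable def ldOp (P : LP V) : LP V := lmul P + dmul P

/-- The `λ`-bracket on `R = ℂ[∂]V` obtained from the generator values `B u v`
(`u, v ∈ V`) by extension via `ℂ`-bilinearity and conformal sesquilinearity: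
`[(∂^m u) λ (∂^n v)] = (-λ)^m (λ+∂)^n [u λ v]`. -/
noncomputable def qbr (B : V → V → LP V) (a b : Conf V) : LP V :=
  Finsupp.sum a fun m am => Finsupp.sum b fun n bn =>
    ((-1 : ℂ) ^ m) • (lmul (V := V))^[m] ((ldOp (V := V))^[n] (B am bn))

/-- The substitution `λ ↦ -λ-∂` in a `λ`-polynomial
(used to express skew-symmetry `[a λ b] = -[b (-λ-∂) a]`). -/
noncomputable def nsubst (P : LP V) : LP V :=
  Finsupp.sum P fun n cn => ((-1 : ℂ) ^ n) • (ldOp (V := V))^[n] (Finsupp.single 0 cn)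

/-- `I` is an ideal of `R = ℂ[∂]V` with `λ`-bracket `qbr B`: a
`ℂ[∂]`-submodule (a `ℂ`-submodule closed under `∂`) such that every
`λ`-coefficient of `[a λ x]` lies in `I` for all `a ∈ R`, `x ∈ I`. -/
def IsConfIdeal (B : V → V → LP V) (I : Submodule ℂ (Conf V)) : Prop :=
  (∀ x ∈ I, Dop x ∈ I) ∧
  (∀ a : Conf V, ∀ x ∈ I, ∀ n : ℕ, qbr B a x n ∈ I)

/-- The conformal algebra `R = ℂ[∂]V` with `λ`-bracket `qbr B` is simple:
its `λ`-bracket is not identically zero and its only ideals are `0` and `R`. -/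
def ConfSimple (B : V → V → LP V) : Prop :=
  (∃ a b : Conf V, qbr B a b ≠ 0) ∧
  ∀ I : Submodule ℂ (Conf V), IsConfIdeal B I → I = ⊥ ∨ I = ⊤

/-- `R = ℂ[∂]V` with the `λ`-bracket `qbr B` is a Lie conformal algebra: the
bracket is `ℂ`-bilinear, satisfies conformal sesquilinearity, skew-symmetry
`[a λ b] = -[b (-λ-∂) a]`, and the Jacobi identity
`[a λ [b μ c]] = [[a λ b] (λ+μ) c] + [b μ [a λ c]]` (the latter written out by
comparing the coefficients of `λ^p μ^q` on both sides). -/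
def IsLieConf (B : V → V → LP V) : Prop :=
  (∀ a b c : Conf V, qbr B (a + b) c = qbr B a c + qbr B b c) ∧
  (∀ a b c : Conf V, qbr B a (b + c) = qbr B a b + qbr B a c) ∧
  (∀ (k : ℂ) (a b : Conf V), qbr B (k • a) b = k • qbr B a b) ∧
  (∀ (k : ℂ) (a b : Conf V), qbr B a (k • b) = k • qbr B a b) ∧
  (∀ a b : Conf V, qbr B (Dop a) b = - lmul (qbr B a b)) ∧
  (∀ a b : Conf V, qbr B a (Dop b) = ldOp (qbr B a b)) ∧
  (∀ a b : Conf V, qbr B a b = - nsubst (qbr B b a)) ∧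
  (∀ a b c : Conf V, ∀ p q : ℕ,
    qbr B a (qbr B b c q) p =
      (∑ n ∈ Finset.Icc q (p + q),
        (n.choose q : ℂ) • qbr B (qbr B a b (p + q - n)) c n)
      + qbr B b (qbr B a c p) q)

/-- Generator values of the `λ`-bracket of the quadratic Lie conformal algebra
associated to a Gel'fand-Dorfman bialgebra `(V, mul, lie)`:
`[u λ v] = ∂(v∘u) + [v,u] + λ(u∘v + v∘u)`. -/
noncomputable def gdB (mul lie : V → V → V) (u v : V) : LP V :=
  Finsupp.single 0 (Finsupp.single 1 (mul v u) + Finsupp.single 0 (lie v u))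
    + Finsupp.single 1 (Finsupp.single 0 (mul u v + mul v u))

end QLCA

open QLCA

/-- The associator `(x,y,z) = x∗(y∗z) − (x∗y)∗z` of the symmetrized product. -/
def njAssoc {V : Type} [AddCommGroup V] [Module ℂ V] (mul : V → V → V) (x y z : V) : V :=
  sProd mul x (sProd mul y z) - sProd mul (sProd mul x y) z

/-- for a Novikov algebra `(V,∘)` the product `a∗b = a∘b + b∘a`
is commutative and satisfies the Tortken identity. -/
theorem stmt_0 {V : Type} [AddCommGroup V] [Module ℂ V] (mul : V → V → V)
    (hN : IsNovikov mul) :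
    (∀ a b : V, sProd mul a b = sProd mul b a) ∧
    (∀ a b c d : V,
      sProd mul (sProd mul a b) (sProd mul c d)
          - sProd mul (sProd mul a d) (sProd mul c b)
        = sProd mul (njAssoc mul a b c) d - sProd mul (njAssoc mul a d c) b) := by
  obtain ⟨⟨hadd1, hadd2, hsm1, hsm2⟩, hlsym, hrc⟩ := hN
  have hz1 : ∀ z : V, mul 0 z = 0 := by
    intro z; have h := hadd1 0 0 z; rw [add_zero] at h; exact (left_eq_add.mp h)
  have hz2 : ∀ z : V, mul z 0 = 0 := by
    intro z; have h := hadd2 z 0 0; rw [add_zero] at h; exact (left_eq_add.mp h)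
  have hneg1 : ∀ x z : V, mul (-x) z = - mul x z := by
    intro x z; have h := hadd1 x (-x) z; rw [add_neg_cancel, hz1] at h
    exact eq_neg_of_add_eq_zero_right h.symm
  have hneg2 : ∀ x z : V, mul z (-x) = - mul z x := by
    intro x z; have h := hadd2 z x (-x); rw [add_neg_cancel, hz2] at h
    exact eq_neg_of_add_eq_zero_right h.symm
  have hsub1 : ∀ x y z : V, mul (x - y) z = mul x z - mul y z := by
    intro x y z; rw [sub_eq_add_neg, hadd1, hneg1, ← sub_eq_add_neg]
  have hsub2 : ∀ x y z : V, mul z (x - y) = mul z x - mul z y := by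
    intro x y z; rw [sub_eq_add_neg, hadd2, hneg2, ← sub_eq_add_neg]
  have hL : ∀ x y z : V,
      mul (mul x y) z - mul x (mul y z) - mul (mul y x) z + mul y (mul x z) = 0 := by
    intro x y z
    have h := hlsym x y z
    calc mul (mul x y) z - mul x (mul y z) - mul (mul y x) z + mul y (mul x z)
        = (mul (mul x y) z - mul x (mul y z)) - (mul (mul y x) z - mul y (mul x z)) := by abel
      _ = 0 := by rw [h]; exact sub_self _
  have hR : ∀ x y z : V, mul (mul x y) z - mul (mul x z) y = 0 :=
    fun x y z => sub_eq_zero.mpr (hrc x y z)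
  refine ⟨fun a b => by simp [sProd, add_comm], fun a b c d => ?_⟩
  have e0 : mul (mul (mul a b) c) d - mul (mul a b) (mul c d) - mul (mul c (mul a b)) d + mul c (mul (mul a b) d) = 0 := hL (mul a b) c d
  have e1 : mul (mul (mul a b) c) d - mul (mul (mul a b) d) c = 0 := hR (mul a b) c d
  have e2 : mul (mul (mul a b) d) c - mul (mul a b) (mul d c) - mul (mul d (mul a b)) c + mul d (mul (mul a b) c) = 0 := hL (mul a b) d c
  have e3 : mul (mul (mul a c) b) d - mul (mul a c) (mul b d) - mul (mul b (mul a c)) d + mul b (mul (mul a c) d) = 0 := hL (mul a c) b d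
  have e4 : mul (mul (mul a c) b) d - mul (mul (mul a c) d) b = 0 := hR (mul a c) b d
  have e5 : mul (mul (mul a c) d) b - mul (mul a c) (mul d b) - mul (mul d (mul a c)) b + mul d (mul (mul a c) b) = 0 := hL (mul a c) d b
  have e6 : mul (mul (mul a d) b) c - mul (mul (mul a d) c) b = 0 := hR (mul a d) b c
  have e7 : mul (mul (mul a d) c) b - mul (mul a d) (mul c b) - mul (mul c (mul a d)) b + mul c (mul (mul a d) b) = 0 := hL (mul a d) c b
  have e8 : mul (mul (mul b a) c) d - mul (mul b a) (mul c d) - mul (mul c (mul b a)) d + mul c (mul (mul b a) d) = 0 := hL (mul b a) c d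
  have e9 : mul (mul (mul b a) c) d - mul (mul (mul b a) d) c = 0 := hR (mul b a) c d
  have e10 : mul (mul (mul b a) d) c - mul (mul b a) (mul d c) - mul (mul d (mul b a)) c + mul d (mul (mul b a) c) = 0 := hL (mul b a) d c
  have e11 : mul (mul (mul b c) a) d - mul (mul (mul b c) d) a = 0 := hR (mul b c) a d
  have e12 : mul (mul (mul b c) d) a - mul (mul b c) (mul d a) - mul (mul d (mul b c)) a + mul d (mul (mul b c) a) = 0 := hL (mul b c) d a
  have e13 : mul (mul (mul b d) a) c - mul (mul (mul b d) c) a = 0 := hR (mul b d) a c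
  have e14 : mul (mul (mul b d) c) a - mul (mul b d) (mul c a) - mul (mul c (mul b d)) a + mul c (mul (mul b d) a) = 0 := hL (mul b d) c a
  have e15 : mul (mul (mul c a) b) d - mul (mul c a) (mul b d) - mul (mul b (mul c a)) d + mul b (mul (mul c a) d) = 0 := hL (mul c a) b d
  have e16 : mul (mul (mul c a) b) d - mul (mul (mul c a) d) b = 0 := hR (mul c a) b d
  have e17 : mul (mul (mul c a) d) b - mul (mul c a) (mul d b) - mul (mul d (mul c a)) b + mul d (mul (mul c a) b) = 0 := hL (mul c a) d b
  have e18 : mul (mul (mul c b) a) d - mul (mul (mul c b) d) a = 0 := hR (mul c b) a d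
  have e19 : mul (mul (mul c b) d) a - mul (mul c b) (mul d a) - mul (mul d (mul c b)) a + mul d (mul (mul c b) a) = 0 := hL (mul c b) d a
  have e20 : mul (mul (mul c d) a) b - mul (mul (mul c d) b) a = 0 := hR (mul c d) a b
  have e21 : mul (mul (mul c d) b) a - mul (mul c d) (mul b a) - mul (mul b (mul c d)) a + mul b (mul (mul c d) a) = 0 := hL (mul c d) b a
  have e22 : mul (mul (mul d a) b) c - mul (mul d a) (mul b c) - mul (mul b (mul d a)) c + mul b (mul (mul d a) c) = 0 := hL (mul d a) b c
  have e23 : mul (mul (mul d a) b) c - mul (mul (mul d a) c) b = 0 := hR (mul d a) b c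
  have e24 : mul (mul (mul d b) a) c - mul (mul (mul d b) c) a = 0 := hR (mul d b) a c
  have e25 : mul (mul (mul d b) c) a - mul (mul d b) (mul c a) - mul (mul c (mul d b)) a + mul c (mul (mul d b) a) = 0 := hL (mul d b) c a
  have e26 : mul (mul (mul d c) a) b - mul (mul (mul d c) b) a = 0 := hR (mul d c) a b
  have e27 : mul (mul (mul d c) b) a - mul (mul d c) (mul b a) - mul (mul b (mul d c)) a + mul b (mul (mul d c) a) = 0 := hL (mul d c) b a
  have e28 : mul (mul c (mul a b)) d - mul (mul c d) (mul a b) = 0 := hR c (mul a b) d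
  have e29 : mul (mul d (mul a b)) c - mul (mul d c) (mul a b) = 0 := hR d (mul a b) c
  have e30 : mul (mul b (mul a c)) d - mul (mul b d) (mul a c) = 0 := hR b (mul a c) d
  have e31 : mul (mul d (mul a c)) b - mul (mul d b) (mul a c) = 0 := hR d (mul a c) b
  have e32 : mul (mul b (mul a d)) c - mul (mul b c) (mul a d) = 0 := hR b (mul a d) c
  have e33 : mul (mul c (mul a d)) b - mul (mul c b) (mul a d) = 0 := hR c (mul a d) b
  have e34 : mul (mul c (mul b a)) d - mul (mul c d) (mul b a) = 0 := hR c (mul b a) d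
  have e35 : mul (mul d (mul b a)) c - mul (mul d c) (mul b a) = 0 := hR d (mul b a) c
  have e36 : mul (mul a (mul b c)) d - mul (mul a d) (mul b c) = 0 := hR a (mul b c) d
  have e37 : mul (mul d (mul b c)) a - mul (mul d a) (mul b c) = 0 := hR d (mul b c) a
  have e38 : mul (mul a (mul b d)) c - mul (mul a c) (mul b d) = 0 := hR a (mul b d) c
  have e39 : mul (mul c (mul b d)) a - mul (mul c a) (mul b d) = 0 := hR c (mul b d) a
  have e40 : mul (mul b (mul c a)) d - mul (mul b d) (mul c a) = 0 := hR b (mul c a) d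
  have e41 : mul (mul d (mul c a)) b - mul (mul d b) (mul c a) = 0 := hR d (mul c a) b
  have e42 : mul (mul a (mul c b)) d - mul (mul a d) (mul c b) = 0 := hR a (mul c b) d
  have e43 : mul (mul d (mul c b)) a - mul (mul d a) (mul c b) = 0 := hR d (mul c b) a
  have e44 : mul (mul a (mul c d)) b - mul (mul a b) (mul c d) = 0 := hR a (mul c d) b
  have e45 : mul (mul b (mul c d)) a - mul (mul b a) (mul c d) = 0 := hR b (mul c d) a
  have e46 : mul (mul b (mul d a)) c - mul (mul b c) (mul d a) = 0 := hR b (mul d a) c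
  have e47 : mul (mul c (mul d a)) b - mul (mul c b) (mul d a) = 0 := hR c (mul d a) b
  have e48 : mul (mul a (mul d b)) c - mul (mul a c) (mul d b) = 0 := hR a (mul d b) c
  have e49 : mul (mul c (mul d b)) a - mul (mul c a) (mul d b) = 0 := hR c (mul d b) a
  have e50 : mul (mul a (mul d c)) b - mul (mul a b) (mul d c) = 0 := hR a (mul d c) b
  have e51 : mul (mul b (mul d c)) a - mul (mul b a) (mul d c) = 0 := hR b (mul d c) a
  have e52 : mul (mul b d) (mul a c) - mul b (mul d (mul a c)) - mul (mul d b) (mul a c) + mul d (mul b (mul a c)) = 0 := hL b d (mul a c)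
  have e53 : mul (mul c d) (mul b a) - mul c (mul d (mul b a)) - mul (mul d c) (mul b a) + mul d (mul c (mul b a)) = 0 := hL c d (mul b a)
  have e54 : mul (mul b c) (mul d a) - mul b (mul c (mul d a)) - mul (mul c b) (mul d a) + mul c (mul b (mul d a)) = 0 := hL b c (mul d a)
  have e55 : mul (mul (mul a b) c) d - mul (mul a (mul b c)) d - mul (mul (mul b a) c) d + mul (mul b (mul a c)) d = 0 := by
    have h2 : mul (mul (mul a b) c - mul a (mul b c) - mul (mul b a) c + mul b (mul a c)) d = 0 := by rw [hL a b c]; exact hz1 _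
    rw [hadd1, hsub1, hsub1] at h2; exact h2
  have e56 : mul d (mul (mul a b) c) - mul d (mul a (mul b c)) - mul d (mul (mul b a) c) + mul d (mul b (mul a c)) = 0 := by
    have h2 : mul d (mul (mul a b) c - mul a (mul b c) - mul (mul b a) c + mul b (mul a c)) = 0 := by rw [hL a b c]; exact hz2 _
    rw [hadd2, hsub2, hsub2] at h2; exact h2
  have e57 : mul (mul (mul a b) c) d - mul (mul (mul a c) b) d = 0 := by
    have h2 : mul (mul (mul a b) c - mul (mul a c) b) d = 0 := by rw [hR a b c]; exact hz1 _
    rw [hsub1] at h2; exact h2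
  have e58 : mul d (mul (mul a b) c) - mul d (mul (mul a c) b) = 0 := by
    have h2 : mul d (mul (mul a b) c - mul (mul a c) b) = 0 := by rw [hR a b c]; exact hz2 _
    rw [hsub2] at h2; exact h2
  have e59 : mul (mul (mul a b) d) c - mul (mul a (mul b d)) c - mul (mul (mul b a) d) c + mul (mul b (mul a d)) c = 0 := by
    have h2 : mul (mul (mul a b) d - mul a (mul b d) - mul (mul b a) d + mul b (mul a d)) c = 0 := by rw [hL a b d]; exact hz1 _
    rw [hadd1, hsub1, hsub1] at h2; exact h2
  have e60 : mul (mul (mul a b) d) c - mul (mul (mul a d) b) c = 0 := by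
    have h2 : mul (mul (mul a b) d - mul (mul a d) b) c = 0 := by rw [hR a b d]; exact hz1 _
    rw [hsub1] at h2; exact h2
  have e61 : mul c (mul (mul a b) d) - mul c (mul (mul a d) b) = 0 := by
    have h2 : mul c (mul (mul a b) d - mul (mul a d) b) = 0 := by rw [hR a b d]; exact hz2 _
    rw [hsub2] at h2; exact h2
  have e62 : mul d (mul (mul a c) b) - mul d (mul a (mul c b)) - mul d (mul (mul c a) b) + mul d (mul c (mul a b)) = 0 := by
    have h2 : mul d (mul (mul a c) b - mul a (mul c b) - mul (mul c a) b + mul c (mul a b)) = 0 := by rw [hL a c b]; exact hz2 _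
    rw [hadd2, hsub2, hsub2] at h2; exact h2
  have e63 : mul b (mul (mul a c) d) - mul b (mul a (mul c d)) - mul b (mul (mul c a) d) + mul b (mul c (mul a d)) = 0 := by
    have h2 : mul b (mul (mul a c) d - mul a (mul c d) - mul (mul c a) d + mul c (mul a d)) = 0 := by rw [hL a c d]; exact hz2 _
    rw [hadd2, hsub2, hsub2] at h2; exact h2
  have e64 : mul (mul (mul a d) b) c - mul (mul a (mul d b)) c - mul (mul (mul d a) b) c + mul (mul d (mul a b)) c = 0 := by
    have h2 : mul (mul (mul a d) b - mul a (mul d b) - mul (mul d a) b + mul d (mul a b)) c = 0 := by rw [hL a d b]; exact hz1 _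
    rw [hadd1, hsub1, hsub1] at h2; exact h2
  have e65 : mul b (mul (mul a d) c) - mul b (mul a (mul d c)) - mul b (mul (mul d a) c) + mul b (mul d (mul a c)) = 0 := by
    have h2 : mul b (mul (mul a d) c - mul a (mul d c) - mul (mul d a) c + mul d (mul a c)) = 0 := by rw [hL a d c]; exact hz2 _
    rw [hadd2, hsub2, hsub2] at h2; exact h2
  have e66 : mul (mul (mul b a) c) d - mul (mul (mul b c) a) d = 0 := by
    have h2 : mul (mul (mul b a) c - mul (mul b c) a) d = 0 := by rw [hR b a c]; exact hz1 _
    rw [hsub1] at h2; exact h2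
  have e67 : mul d (mul (mul b a) c) - mul d (mul (mul b c) a) = 0 := by
    have h2 : mul d (mul (mul b a) c - mul (mul b c) a) = 0 := by rw [hR b a c]; exact hz2 _
    rw [hsub2] at h2; exact h2
  have e68 : mul (mul (mul b a) d) c - mul (mul (mul b d) a) c = 0 := by
    have h2 : mul (mul (mul b a) d - mul (mul b d) a) c = 0 := by rw [hR b a d]; exact hz1 _
    rw [hsub1] at h2; exact h2
  have e69 : mul c (mul (mul b a) d) - mul c (mul (mul b d) a) = 0 := by
    have h2 : mul c (mul (mul b a) d - mul (mul b d) a) = 0 := by rw [hR b a d]; exact hz2 _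
    rw [hsub2] at h2; exact h2
  have e70 : mul (mul (mul b d) a) c - mul (mul b (mul d a)) c - mul (mul (mul d b) a) c + mul (mul d (mul b a)) c = 0 := by
    have h2 : mul (mul (mul b d) a - mul b (mul d a) - mul (mul d b) a + mul d (mul b a)) c = 0 := by rw [hL b d a]; exact hz1 _
    rw [hadd1, hsub1, hsub1] at h2; exact h2
  have e71 : mul c (mul (mul b d) a) - mul c (mul b (mul d a)) - mul c (mul (mul d b) a) + mul c (mul d (mul b a)) = 0 := by
    have h2 : mul c (mul (mul b d) a - mul b (mul d a) - mul (mul d b) a + mul d (mul b a)) = 0 := by rw [hL b d a]; exact hz2 _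
    rw [hadd2, hsub2, hsub2] at h2; exact h2
  have e72 : mul (mul (mul c a) b) d - mul (mul (mul c b) a) d = 0 := by
    have h2 : mul (mul (mul c a) b - mul (mul c b) a) d = 0 := by rw [hR c a b]; exact hz1 _
    rw [hsub1] at h2; exact h2
  have e73 : mul d (mul (mul c a) b) - mul d (mul (mul c b) a) = 0 := by
    have h2 : mul d (mul (mul c a) b - mul (mul c b) a) = 0 := by rw [hR c a b]; exact hz2 _
    rw [hsub2] at h2; exact h2
  have main : sProd mul (sProd mul a b) (sProd mul c d)
          - sProd mul (sProd mul a d) (sProd mul c b)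
        - (sProd mul (njAssoc mul a b c) d - sProd mul (njAssoc mul a d c) b) = 0 := by
    calc sProd mul (sProd mul a b) (sProd mul c d)
          - sProd mul (sProd mul a d) (sProd mul c b)
        - (sProd mul (njAssoc mul a b c) d - sProd mul (njAssoc mul a d c) b)
        = (-2 : ℤ) • (mul (mul (mul a b) c) d - mul (mul a b) (mul c d) - mul (mul c (mul a b)) d + mul c (mul (mul a b) d)) +
      (-1 : ℤ) • (mul (mul (mul a b) c) d - mul (mul (mul a b) d) c) +
      (-2 : ℤ) • (mul (mul (mul a b) d) c - mul (mul a b) (mul d c) - mul (mul d (mul a b)) c + mul d (mul (mul a b) c)) +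
      (1 : ℤ) • (mul (mul (mul a c) b) d - mul (mul a c) (mul b d) - mul (mul b (mul a c)) d + mul b (mul (mul a c) d)) +
      (1 : ℤ) • (mul (mul (mul a c) b) d - mul (mul (mul a c) d) b) +
      (1 : ℤ) • (mul (mul (mul a c) d) b - mul (mul a c) (mul d b) - mul (mul d (mul a c)) b + mul d (mul (mul a c) b)) +
      (3 : ℤ) • (mul (mul (mul a d) b) c - mul (mul (mul a d) c) b) +
      (2 : ℤ) • (mul (mul (mul a d) c) b - mul (mul a d) (mul c b) - mul (mul c (mul a d)) b + mul c (mul (mul a d) b)) +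
      (-2 : ℤ) • (mul (mul (mul b a) c) d - mul (mul b a) (mul c d) - mul (mul c (mul b a)) d + mul c (mul (mul b a) d)) +
      (1 : ℤ) • (mul (mul (mul b a) c) d - mul (mul (mul b a) d) c) +
      (-2 : ℤ) • (mul (mul (mul b a) d) c - mul (mul b a) (mul d c) - mul (mul d (mul b a)) c + mul d (mul (mul b a) c)) +
      (3 : ℤ) • (mul (mul (mul b c) a) d - mul (mul (mul b c) d) a) +
      (3 : ℤ) • (mul (mul (mul b c) d) a - mul (mul b c) (mul d a) - mul (mul d (mul b c)) a + mul d (mul (mul b c) a)) +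
      (1 : ℤ) • (mul (mul (mul b d) a) c - mul (mul (mul b d) c) a) +
      (1 : ℤ) • (mul (mul (mul b d) c) a - mul (mul b d) (mul c a) - mul (mul c (mul b d)) a + mul c (mul (mul b d) a)) +
      (-1 : ℤ) • (mul (mul (mul c a) b) d - mul (mul c a) (mul b d) - mul (mul b (mul c a)) d + mul b (mul (mul c a) d)) +
      (-1 : ℤ) • (mul (mul (mul c a) b) d - mul (mul (mul c a) d) b) +
      (-1 : ℤ) • (mul (mul (mul c a) d) b - mul (mul c a) (mul d b) - mul (mul d (mul c a)) b + mul d (mul (mul c a) b)) +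
      (1 : ℤ) • (mul (mul (mul c b) a) d - mul (mul (mul c b) d) a) +
      (1 : ℤ) • (mul (mul (mul c b) d) a - mul (mul c b) (mul d a) - mul (mul d (mul c b)) a + mul d (mul (mul c b) a)) +
      (1 : ℤ) • (mul (mul (mul c d) a) b - mul (mul (mul c d) b) a) +
      (1 : ℤ) • (mul (mul (mul c d) b) a - mul (mul c d) (mul b a) - mul (mul b (mul c d)) a + mul b (mul (mul c d) a)) +
      (-2 : ℤ) • (mul (mul (mul d a) b) c - mul (mul d a) (mul b c) - mul (mul b (mul d a)) c + mul b (mul (mul d a) c)) +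
      (1 : ℤ) • (mul (mul (mul d a) b) c - mul (mul (mul d a) c) b) +
      (1 : ℤ) • (mul (mul (mul d b) a) c - mul (mul (mul d b) c) a) +
      (1 : ℤ) • (mul (mul (mul d b) c) a - mul (mul d b) (mul c a) - mul (mul c (mul d b)) a + mul c (mul (mul d b) a)) +
      (1 : ℤ) • (mul (mul (mul d c) a) b - mul (mul (mul d c) b) a) +
      (1 : ℤ) • (mul (mul (mul d c) b) a - mul (mul d c) (mul b a) - mul (mul b (mul d c)) a + mul b (mul (mul d c) a)) +
      (-1 : ℤ) • (mul (mul c (mul a b)) d - mul (mul c d) (mul a b)) +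
      (-1 : ℤ) • (mul (mul d (mul a b)) c - mul (mul d c) (mul a b)) +
      (-1 : ℤ) • (mul (mul b (mul a c)) d - mul (mul b d) (mul a c)) +
      (1 : ℤ) • (mul (mul d (mul a c)) b - mul (mul d b) (mul a c)) +
      (1 : ℤ) • (mul (mul b (mul a d)) c - mul (mul b c) (mul a d)) +
      (1 : ℤ) • (mul (mul c (mul a d)) b - mul (mul c b) (mul a d)) +
      (-1 : ℤ) • (mul (mul c (mul b a)) d - mul (mul c d) (mul b a)) +
      (-3 : ℤ) • (mul (mul d (mul b a)) c - mul (mul d c) (mul b a)) +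
      (1 : ℤ) • (mul (mul a (mul b c)) d - mul (mul a d) (mul b c)) +
      (3 : ℤ) • (mul (mul d (mul b c)) a - mul (mul d a) (mul b c)) +
      (-1 : ℤ) • (mul (mul a (mul b d)) c - mul (mul a c) (mul b d)) +
      (1 : ℤ) • (mul (mul c (mul b d)) a - mul (mul c a) (mul b d)) +
      (-1 : ℤ) • (mul (mul b (mul c a)) d - mul (mul b d) (mul c a)) +
      (-1 : ℤ) • (mul (mul d (mul c a)) b - mul (mul d b) (mul c a)) +
      (-1 : ℤ) • (mul (mul a (mul c b)) d - mul (mul a d) (mul c b)) +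
      (1 : ℤ) • (mul (mul d (mul c b)) a - mul (mul d a) (mul c b)) +
      (1 : ℤ) • (mul (mul a (mul c d)) b - mul (mul a b) (mul c d)) +
      (1 : ℤ) • (mul (mul b (mul c d)) a - mul (mul b a) (mul c d)) +
      (-1 : ℤ) • (mul (mul b (mul d a)) c - mul (mul b c) (mul d a)) +
      (-1 : ℤ) • (mul (mul c (mul d a)) b - mul (mul c b) (mul d a)) +
      (-1 : ℤ) • (mul (mul a (mul d b)) c - mul (mul a c) (mul d b)) +
      (1 : ℤ) • (mul (mul c (mul d b)) a - mul (mul c a) (mul d b)) +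
      (1 : ℤ) • (mul (mul a (mul d c)) b - mul (mul a b) (mul d c)) +
      (1 : ℤ) • (mul (mul b (mul d c)) a - mul (mul b a) (mul d c)) +
      (-1 : ℤ) • (mul (mul b d) (mul a c) - mul b (mul d (mul a c)) - mul (mul d b) (mul a c) + mul d (mul b (mul a c))) +
      (1 : ℤ) • (mul (mul c d) (mul b a) - mul c (mul d (mul b a)) - mul (mul d c) (mul b a) + mul d (mul c (mul b a))) +
      (1 : ℤ) • (mul (mul b c) (mul d a) - mul b (mul c (mul d a)) - mul (mul c b) (mul d a) + mul c (mul b (mul d a))) +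
      (2 : ℤ) • (mul (mul (mul a b) c) d - mul (mul a (mul b c)) d - mul (mul (mul b a) c) d + mul (mul b (mul a c)) d) +
      (1 : ℤ) • (mul d (mul (mul a b) c) - mul d (mul a (mul b c)) - mul d (mul (mul b a) c) + mul d (mul b (mul a c))) +
      (2 : ℤ) • (mul (mul (mul a b) c) d - mul (mul (mul a c) b) d) +
      (2 : ℤ) • (mul d (mul (mul a b) c) - mul d (mul (mul a c) b)) +
      (-1 : ℤ) • (mul (mul (mul a b) d) c - mul (mul a (mul b d)) c - mul (mul (mul b a) d) c + mul (mul b (mul a d)) c) +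
      (2 : ℤ) • (mul (mul (mul a b) d) c - mul (mul (mul a d) b) c) +
      (2 : ℤ) • (mul c (mul (mul a b) d) - mul c (mul (mul a d) b)) +
      (1 : ℤ) • (mul d (mul (mul a c) b) - mul d (mul a (mul c b)) - mul d (mul (mul c a) b) + mul d (mul c (mul a b))) +
      (-1 : ℤ) • (mul b (mul (mul a c) d) - mul b (mul a (mul c d)) - mul b (mul (mul c a) d) + mul b (mul c (mul a d))) +
      (-1 : ℤ) • (mul (mul (mul a d) b) c - mul (mul a (mul d b)) c - mul (mul (mul d a) b) c + mul (mul d (mul a b)) c) +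
      (-1 : ℤ) • (mul b (mul (mul a d) c) - mul b (mul a (mul d c)) - mul b (mul (mul d a) c) + mul b (mul d (mul a c))) +
      (4 : ℤ) • (mul (mul (mul b a) c) d - mul (mul (mul b c) a) d) +
      (4 : ℤ) • (mul d (mul (mul b a) c) - mul d (mul (mul b c) a)) +
      (2 : ℤ) • (mul (mul (mul b a) d) c - mul (mul (mul b d) a) c) +
      (2 : ℤ) • (mul c (mul (mul b a) d) - mul c (mul (mul b d) a)) +
      (1 : ℤ) • (mul (mul (mul b d) a) c - mul (mul b (mul d a)) c - mul (mul (mul d b) a) c + mul (mul d (mul b a)) c) +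
      (1 : ℤ) • (mul c (mul (mul b d) a) - mul c (mul b (mul d a)) - mul c (mul (mul d b) a) + mul c (mul d (mul b a))) +
      (2 : ℤ) • (mul (mul (mul c a) b) d - mul (mul (mul c b) a) d) +
      (2 : ℤ) • (mul d (mul (mul c a) b) - mul d (mul (mul c b) a)) := by
          simp only [sProd, njAssoc, hadd1, hadd2, hsub1, hsub2]; abel
      _ = 0 := by rw [e0, e1, e2, e3, e4, e5, e6, e7, e8, e9, e10, e11, e12, e13, e14, e15, e16, e17, e18, e19, e20, e21, e22, e23, e24, e25, e26, e27, e28, e29, e30, e31, e32, e33, e34, e35, e36, e37, e38, e39, e40, e41, e42, e43, e44, e45, e46, e47, e48, e49, e50, e51, e52, e53, e54, e55, e56, e57, e58, e59, e60, e61, e62, e63, e64, e65, e66, e67, e68, e69, e70, e71, e72, e73]; simp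
  exact sub_eq_zero.mp main
end

section
/- Let (V,∘) be a Novikov algebra, let k ∈ ℂ, and let [a,b]⁻_k = k(a∘b − b∘a), so that (V,∘,[·,·]⁻_k) is a Gel'fand-Dorfman bialgebra. If the quadratic Lie conformal algebra R = ℂ[∂]V corresponding to (V,∘,[·,·]⁻_k) is simple, then (V,∘) is a simple Novikov algebra. In particular, if the quadratic Lie conformal algebra corresponding to a Novikov algebra (V,∘) with the trivial Lie bracket is simple, then (V,∘) is simple. -/
set_option maxSynthPendingDepth 3

open QLCA

section Aux

variable {V : Type} [AddCommGroup V] [Module ℂ V]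

/-- Lift of a submodule `I ⊆ V` to `ℂ[∂]I ⊆ Conf V`. -/
def liftC (I : Submodule ℂ V) : Submodule ℂ (Conf V) where
  carrier := {a | ∀ m, a m ∈ I}
  add_mem' := by intro a b ha hb m; simpa using add_mem (ha m) (hb m)
  zero_mem' := by intro m; simp
  smul_mem' := by intro c a ha m; simpa using Submodule.smul_mem _ c (ha m)

/-- Lift of a submodule `I ⊆ V` to λ-polynomials with coefficients in `ℂ[∂]I`. -/
def liftP (I : Submodule ℂ V) : Submodule ℂ (LP V) where
  carrier := {P | ∀ n, P n ∈ liftC I}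
  add_mem' := by intro a b ha hb n; simpa using add_mem (ha n) (hb n)
  zero_mem' := by intro n; simp
  smul_mem' := by intro c a ha n; simpa using Submodule.smul_mem _ c (ha n)

lemma singleC_mem {I : Submodule ℂ V} {x : V} (hx : x ∈ I) (k : ℕ) :
    Finsupp.single k x ∈ liftC I := by
  intro m
  rw [Finsupp.single_apply]
  split <;> simp [hx]

lemma singleP_mem {I : Submodule ℂ V} {c : Conf V} (hc : c ∈ liftC I) (k : ℕ) :
    Finsupp.single k c ∈ liftP I := by
  intro n
  rw [Finsupp.single_apply]
  split <;> simp [hc, Submodule.zero_mem]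

lemma Dop_mem {I : Submodule ℂ V} {a : Conf V} (ha : a ∈ liftC I) :
    Dop a ∈ liftC I := by
  rw [Dop, Finsupp.mapDomain]
  exact Submodule.finsuppSum_mem _ _ _ _ fun i _ => singleC_mem (ha i) _

lemma lmul_mem {I : Submodule ℂ V} {P : LP V} (hP : P ∈ liftP I) :
    lmul P ∈ liftP I := by
  rw [lmul, Finsupp.mapDomain]
  exact Submodule.finsuppSum_mem _ _ _ _ fun i _ => singleP_mem (hP i) _

lemma dmul_mem {I : Submodule ℂ V} {P : LP V} (hP : P ∈ liftP I) :
    dmul P ∈ liftP I := by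
  intro n
  rw [dmul, Finsupp.mapRange_apply]
  exact Dop_mem (hP n)

lemma ldOp_mem {I : Submodule ℂ V} {P : LP V} (hP : P ∈ liftP I) :
    ldOp P ∈ liftP I :=
  add_mem (lmul_mem hP) (dmul_mem hP)

lemma lmul_iter_mem {I : Submodule ℂ V} {P : LP V} (hP : P ∈ liftP I) (m : ℕ) :
    (lmul (V := V))^[m] P ∈ liftP I := by
  induction m with
  | zero => simpa using hP
  | succ m ih => rw [Function.iterate_succ_apply']; exact lmul_mem ih

lemma ldOp_iter_mem {I : Submodule ℂ V} {P : LP V} (hP : P ∈ liftP I) (n : ℕ) :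
    (ldOp (V := V))^[n] P ∈ liftP I := by
  induction n with
  | zero => simpa using hP
  | succ n ih => rw [Function.iterate_succ_apply']; exact ldOp_mem ih

lemma gdB_mem {mul lie : V → V → V} {I : Submodule ℂ V}
    (hI : IsNovikovIdeal mul I)
    (hlie : ∀ a ∈ I, ∀ b : V, lie a b ∈ I ∧ lie b a ∈ I)
    {u v : V} (hv : v ∈ I) : gdB mul lie u v ∈ liftP I := by
  apply add_mem
  · exact singleP_mem (add_mem (singleC_mem ((hI v hv u).1) 1)
      (singleC_mem ((hlie v hv u).1) 0)) 0
  · exact singleP_mem (singleC_mem (add_mem (hI v hv u).2 (hI v hv u).1) 0) 1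

lemma qbr_mem {B : V → V → LP V} {I : Submodule ℂ V}
    (hB : ∀ u : V, ∀ v ∈ I, B u v ∈ liftP I)
    (a : Conf V) {x : Conf V} (hx : x ∈ liftC I) :
    qbr B a x ∈ liftP I := by
  rw [qbr]
  apply Submodule.finsuppSum_mem
  intro m _
  apply Submodule.finsuppSum_mem
  intro n _
  exact Submodule.smul_mem _ _ (lmul_iter_mem (ldOp_iter_mem (hB _ _ (hx n)) n) m)

lemma main_lemma (mul lie : V → V → V)
    (hlie : ∀ (I : Submodule ℂ V), IsNovikovIdeal mul I →
      ∀ a ∈ I, ∀ b : V, lie a b ∈ I ∧ lie b a ∈ I)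
    (hlie0 : (∀ x y : V, mul x y = 0) → ∀ a b : V, lie a b = 0)
    (hS : ConfSimple (gdB mul lie)) : NovikovSimple mul := by
  constructor
  · by_contra h
    push_neg at h
    obtain ⟨a, b, hab⟩ := hS.1
    apply hab
    have hB : ∀ u v : V, gdB mul lie u v = 0 := by
      intro u v
      simp [gdB, h, hlie0 h]
    rw [qbr, Finsupp.sum]
    apply Finset.sum_eq_zero
    intro m _
    rw [Finsupp.sum]
    apply Finset.sum_eq_zero
    intro n _
    have h0 : ldOp (V := V) 0 = 0 := by simp [ldOp, lmul, dmul]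
    have h1 : lmul (V := V) 0 = 0 := by simp [lmul]
    rw [hB, Function.iterate_fixed h0, Function.iterate_fixed h1, smul_zero]
  · intro I hI
    have hci : IsConfIdeal (gdB mul lie) (liftC I) := by
      constructor
      · exact fun x hx => Dop_mem hx
      · intro a x hx n
        exact qbr_mem (fun u v hv => gdB_mem hI (hlie I hI) hv) a hx n
    rcases hS.2 (liftC I) hci with h | h
    · left
      rw [Submodule.eq_bot_iff] at h ⊢
      intro x hx
      have := h (Finsupp.single 0 x) (singleC_mem hx 0)
      simpa [Finsupp.single_eq_zero] using this
    · right
      rw [Submodule.eq_top_iff'] at h ⊢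
      intro x
      have := h (Finsupp.single 0 x) 0
      simpa using this

end Aux


/-- if the quadratic Lie conformal algebra corresponding to
`(V,∘,[·,·]⁻ₖ)`, where `[a,b]⁻ₖ = k(a∘b − b∘a)`, is simple, then `(V,∘)` is a
simple Novikov algebra; in particular the same holds for the trivial Lie
bracket (`k = 0`). -/
theorem stmt_3 {V : Type} [AddCommGroup V] [Module ℂ V] (mul : V → V → V)
    (hN : IsNovikov mul) :
    (∀ k : ℂ,
      ConfSimple (gdB mul (fun a b : V => k • (mul a b - mul b a))) →
        NovikovSimple mul) ∧
    (ConfSimple (gdB mul (fun _ _ : V => (0 : V))) → NovikovSimple mul) := by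
  have main := fun lie h1 h2 => main_lemma mul lie h1 h2
  constructor
  · intro k hS
    apply main_lemma mul _ _ _ hS
    · intro I hI a ha b
      have h1 := (hI a ha b).1
      have h2 := (hI a ha b).2
      exact ⟨Submodule.smul_mem _ k (sub_mem h1 h2),
             Submodule.smul_mem _ k (sub_mem h2 h1)⟩
    · intro h a b
      simp [h a b, h b a]
  · intro hS
    apply main_lemma mul _ _ _ hS
    · intro I hI a ha b
      exact ⟨Submodule.zero_mem I, Submodule.zero_mem I⟩
    · intro _ a b
      rfl
end

section
/- Let (V,∘) be a simple Novikov algebra over ℂ and define a∗b = a∘b + b∘a. Then there is no nonzero element a ∈ V such that a∗b = 0 for all b ∈ V; equivalently, for every nonzero a ∈ V there exists b ∈ V with a∘b + b∘a ≠ 0. -/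
set_option maxSynthPendingDepth 3

open QLCA

/-- in a simple Novikov algebra `(V,∘)` there is no nonzero
element `a` with `a∗b = a∘b + b∘a = 0` for all `b`; equivalently, for every
nonzero `a` there is `b` with `a∘b + b∘a ≠ 0`. -/
theorem stmt_4 {V : Type} [AddCommGroup V] [Module ℂ V] (mul : V → V → V)
    (hN : IsNovikov mul) (hs : NovikovSimple mul) :
    (¬ ∃ a : V, a ≠ 0 ∧ ∀ b : V, mul a b + mul b a = 0) ∧
    (∀ a : V, a ≠ 0 → ∃ b : V, mul a b + mul b a ≠ 0) := by
  obtain ⟨⟨hadd1, hadd2, hsmul1, hsmul2⟩, hls, hrc⟩ := hN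
  obtain ⟨⟨a0, b0, hab0⟩, hsimp⟩ := hs
  have hneg1 : ∀ x y : V, mul (-x) y = -(mul x y) := fun x y => by
    have := hsmul1 (-1) x y; simpa using this
  have hneg2 : ∀ x y : V, mul x (-y) = -(mul x y) := fun x y => by
    have := hsmul2 (-1) x y; simpa using this
  have h0l : ∀ y : V, mul 0 y = 0 := fun y => by
    have := hsmul1 0 y y; simpa using this
  have h0r : ∀ x : V, mul x 0 = 0 := fun x => by
    have := hsmul2 0 x x; simpa using this
  let T : Submodule ℂ V :=
    { carrier := {a | ∀ b, mul a b + mul b a = 0}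
      add_mem' := by
        intro x y hx hy b
        rw [hadd1, hadd2,
          show mul x b + mul y b + (mul b x + mul b y)
            = (mul x b + mul b x) + (mul y b + mul b y) by abel,
          hx b, hy b, add_zero]
      zero_mem' := fun b => by rw [h0l, h0r, add_zero]
      smul_mem' := by
        intro c x hx b
        rw [hsmul1, hsmul2, ← smul_add, hx b, smul_zero] }
  have hmem : ∀ a : V, a ∈ T ↔ ∀ b, mul a b + mul b a = 0 := fun a => Iff.rfl
  have hTideal : IsNovikovIdeal mul T := by
    intro a ha b
    have H1 : ∀ x : V, mul a x = -(mul x a) :=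
      fun x => eq_neg_of_add_eq_zero_left ((hmem a).mp ha x)
    have H2 : ∀ x : V, mul x a = -(mul a x) :=
      fun x => eq_neg_of_add_eq_zero_right ((hmem a).mp ha x)
    have habT : mul a b ∈ T := by
      rw [hmem]
      intro c
      have h1 := hls c a b
      have e1 : mul (mul c a) b = -(mul (mul a c) b) := by
        rw [H2 c, hneg1]
      have e2 : mul a (mul c b) = mul (mul a c) b := by
        rw [H1 (mul c b), hrc c b a, H2 c, hneg1, neg_neg]
      rw [e1, e2] at h1
      -- h1 : -(mul (mul a c) b) - mul c (mul a b) = mul (mul a c) b - mul (mul a c) b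
      have h2 : mul c (mul a b) = -(mul (mul a c) b) := by
        rw [sub_self, sub_eq_zero] at h1
        exact h1.symm
      rw [hrc a b c, h2]
      simp
    refine ⟨habT, ?_⟩
    have : mul b a = -(mul a b) := H2 b
    rw [this]
    exact T.neg_mem habT
  rcases hsimp T hTideal with hT | hT
  · -- T = ⊥ : done
    have key : ∀ a : V, (∀ b, mul a b + mul b a = 0) → a = 0 := by
      intro a h
      have : a ∈ T := (hmem a).mpr h
      rw [hT] at this
      simpa using this
    constructor
    · rintro ⟨a, ha, h⟩; exact ha (key a h)
    · intro a ha
      by_contra h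
      push_neg at h
      exact ha (key a h)
  · -- T = ⊤ : anticommutative, derive contradiction
    exfalso
    have anti : ∀ x y : V, mul y x = -(mul x y) := by
      intro x y
      have hx : x ∈ T := by rw [hT]; exact Submodule.mem_top
      exact eq_neg_of_add_eq_zero_right ((hmem x).mp hx y)
    have hA : ∀ x y z : V, mul x (mul y z) = -(mul (mul x y) z) := by
      intro x y z
      have h1 := hls x z y
      rw [hrc x z y] at h1
      have e1 : mul x (mul z y) = -(mul x (mul y z)) := by
        rw [anti y z, hneg2]
      have e2 : mul (mul z x) y = -(mul (mul x y) z) := by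
        rw [anti x z, hneg1, hrc x z y]
      have e3 : mul z (mul x y) = -(mul (mul x y) z) := anti (mul x y) z
      rw [e1, e2, e3] at h1
      -- h1 : mul (mul x y) z - -(mul x (mul y z)) = -(mul (mul x y) z) - -(mul (mul x y) z)
      have h2 : mul (mul x y) z + mul x (mul y z) = 0 := by
        rw [sub_neg_eq_add, sub_self] at h1
        exact h1
      exact eq_neg_of_add_eq_zero_right h2
    have hZ : ∀ x y z : V, mul (mul x y) z = 0 := by
      intro x y z
      have h1 := hls x y z
      have e1 : mul x (mul y z) = -(mul (mul x y) z) := hA x y z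
      have e2 : mul (mul y x) z = -(mul (mul x y) z) := by
        rw [anti x y, hneg1]
      have e3 : mul y (mul x z) = mul (mul x y) z := by
        rw [hA y x z, anti x y, hneg1, neg_neg]
      rw [e1, e2, e3] at h1
      set Z := mul (mul x y) z with hZdef
      -- h1 : Z - -Z = -Z - Z
      rw [sub_neg_eq_add] at h1
      have h7 : (Z + Z) + (Z + Z) = 0 := by
        nth_rewrite 1 [h1]
        abel
      have h8 : (4:ℂ) • Z = 0 := by
        rw [show (4:ℂ) = 2 + 2 by norm_num, add_smul, two_smul]
        exact h7
      rcases smul_eq_zero.mp h8 with h | h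
      · norm_num at h
      · exact h
    let I : Submodule ℂ V := Submodule.span ℂ {v | ∃ x y : V, mul x y = v}
    have hIz : ∀ a ∈ I, ∀ b : V, mul a b = 0 := by
      intro a ha
      refine Submodule.span_induction ?_ ?_ ?_ ?_ ha
      · rintro v ⟨x, y, rfl⟩ b; exact hZ x y b
      · intro b; exact h0l b
      · intro u v _ _ hu hv b; rw [hadd1, hu b, hv b, add_zero]
      · intro c u _ hu b; rw [hsmul1, hu b, smul_zero]
    have hIideal : IsNovikovIdeal mul I := by
      intro a ha b
      constructor
      · rw [hIz a ha b]; exact I.zero_mem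
      · exact Submodule.subset_span ⟨b, a, rfl⟩
    rcases hsimp I hIideal with hI | hI
    · have : mul a0 b0 ∈ I := Submodule.subset_span ⟨a0, b0, rfl⟩
      rw [hI] at this
      exact hab0 (by simpa using this)
    · have : a0 ∈ I := by rw [hI]; exact Submodule.mem_top
      exact hab0 (hIz a0 this b0)
end

section
/- Let (V,∘,[·,·]) be a Gel'fand-Dorfman bialgebra such that (V,∘) is a simple Novikov algebra and V = V∗V, where a∗b = a∘b + b∘a and V∗V is the ℂ-linear span of all a∗b. Then the quadratic Lie conformal algebra R = ℂ[∂]V corresponding to (V,∘,[·,·]) is simple. -/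
set_option maxSynthPendingDepth 3

open QLCA

section Helpers

variable {V : Type} [AddCommGroup V] [Module ℂ V]

lemma Dop_apply_succ (a : Conf V) (m : ℕ) : Dop a (m + 1) = a m :=
  Finsupp.mapDomain_apply (add_left_injective 1) a m

lemma Dop_apply_zero (a : Conf V) : Dop a 0 = 0 :=
  Finsupp.mapDomain_notin_range _ _ (by simp)

lemma Dop_zero : Dop (0 : Conf V) = 0 := Finsupp.mapDomain_zero

lemma Dop_single (n : ℕ) (w : V) :
    Dop (Finsupp.single n w) = Finsupp.single (n + 1) w :=
  Finsupp.mapDomain_single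

lemma Dop_iter_single (j : ℕ) (w : V) :
    Dop^[j] (Finsupp.single 0 w : Conf V) = Finsupp.single j w := by
  induction j with
  | zero => rfl
  | succ j ih => rw [Function.iterate_succ_apply', ih, Dop_single]

lemma Dop_iter_apply (j : ℕ) (x : Conf V) (m : ℕ) :
    Dop^[j] x m = if j ≤ m then x (m - j) else 0 := by
  induction j generalizing m with
  | zero => simp
  | succ j ih =>
    rw [Function.iterate_succ_apply']
    cases m with
    | zero => rw [Dop_apply_zero]; simp
    | succ m =>
      rw [Dop_apply_succ, ih]
      simp [Nat.succ_sub_succ, Nat.succ_le_succ_iff]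

lemma Dop_iter_mem {I : Submodule ℂ (Conf V)} (hD : ∀ x ∈ I, Dop x ∈ I)
    {x : Conf V} (hx : x ∈ I) (j : ℕ) : Dop^[j] x ∈ I := by
  induction j with
  | zero => exact hx
  | succ j ih => rw [Function.iterate_succ_apply']; exact hD _ ih

lemma lmul_apply_succ (P : LP V) (p : ℕ) : lmul P (p + 1) = P p :=
  Finsupp.mapDomain_apply (add_left_injective 1) P p

lemma lmul_apply_zero (P : LP V) : lmul P 0 = 0 :=
  Finsupp.mapDomain_notin_range _ _ (by simp)

lemma dmul_apply (P : LP V) (p : ℕ) : dmul P p = Dop (P p) :=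
  Finsupp.mapRange_apply

lemma ldOp_apply_succ (P : LP V) (p : ℕ) :
    ldOp P (p + 1) = P p + Dop (P (p + 1)) := by
  simp [ldOp, Finsupp.add_apply, lmul_apply_succ, dmul_apply]

lemma ldOp_zero : ldOp (0 : LP V) = 0 := by
  simp [ldOp, lmul, dmul]

lemma ldOp_iter_zero (n : ℕ) : (ldOp (V := V))^[n] 0 = 0 :=
  Function.iterate_fixed ldOp_zero n

/-- Coefficients of `(λ+∂)^n P` for `P` of `λ`-degree at most 1. -/
lemma ldOp_iter_coeffs (P : LP V) (hP : ∀ q, 1 < q → P q = 0) (n : ℕ) :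
    (∀ q, n + 1 < q → (ldOp (V := V))^[n] P q = 0) ∧
    (ldOp (V := V))^[n] P (n + 1) = P 1 ∧
    (ldOp (V := V))^[n] P n = P 0 + n • Dop (P 1) := by
  induction n with
  | zero => simpa using hP
  | succ n ih =>
    rw [Function.iterate_succ_apply']
    refine ⟨?_, ?_, ?_⟩
    · intro q hq
      obtain ⟨q', rfl⟩ : ∃ q', q = q' + 1 := ⟨q - 1, by omega⟩
      rw [ldOp_apply_succ, ih.1 q' (by omega), ih.1 (q' + 1) (by omega),
        Dop_zero, add_zero]
    · rw [ldOp_apply_succ, ih.2.1, ih.1 (n + 1 + 1) (by omega), Dop_zero,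
        add_zero]
    · rw [ldOp_apply_succ, ih.2.1, ih.2.2, succ_nsmul]
      abel

lemma qbr_single_zero (B : V → V → LP V) (hB : ∀ v, B 0 v = 0) (u : V)
    (x : Conf V) :
    qbr B (Finsupp.single 0 u) x
      = x.sum fun n xn => (ldOp (V := V))^[n] (B u xn) := by
  unfold qbr
  rw [Finsupp.sum_single_index (by simp [hB, ldOp_iter_zero])]
  simp

section GdB

variable {mul lie : V → V → V}

lemma gdB_apply_zero (u v : V) :
    gdB mul lie u v 0
      = Finsupp.single 1 (mul v u) + Finsupp.single 0 (lie v u) := by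
  simp [gdB, Finsupp.single_apply]

lemma gdB_apply_one (u v : V) :
    gdB mul lie u v 1 = Finsupp.single 0 (mul u v + mul v u) := by
  simp [gdB, Finsupp.single_apply]

lemma gdB_apply_big (u v : V) (q : ℕ) (hq : 1 < q) : gdB mul lie u v q = 0 := by
  simp only [gdB, Finsupp.add_apply, Finsupp.single_apply]
  rw [if_neg (by omega), if_neg (by omega), add_zero]

lemma gdB_zero_left (h1 : ∀ z : V, mul 0 z = 0) (h2 : ∀ z : V, mul z 0 = 0)
    (h3 : ∀ z : V, lie 0 z = 0) (h4 : ∀ z : V, lie z 0 = 0) (v : V) :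
    gdB mul lie 0 v = 0 := by
  simp [gdB, h1, h2, h3, h4]

lemma gdB_zero_right (h1 : ∀ z : V, mul 0 z = 0) (h2 : ∀ z : V, mul z 0 = 0)
    (h3 : ∀ z : V, lie 0 z = 0) (h4 : ∀ z : V, lie z 0 = 0) (u : V) :
    gdB mul lie u 0 = 0 := by
  simp [gdB, h1, h2, h3, h4]

/-- The key coefficient computation: for `x` of `∂`-degree at most `k` and
`u ∈ V`, the `λ^(k+1)` coefficient of `[u λ x]` is `u∗(x k)`, and the `λ^k`
coefficient has `∂`-degree at most 1 with `∂`-coefficient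
`(x k)∘u + k (u∗(x k))`. -/
lemma qbr_key (h1 : ∀ z : V, mul 0 z = 0) (h2 : ∀ z : V, mul z 0 = 0)
    (h3 : ∀ z : V, lie 0 z = 0) (h4 : ∀ z : V, lie z 0 = 0)
    (u : V) (x : Conf V) (k : ℕ) (hx : ∀ m, k < m → x m = 0) :
    qbr (gdB mul lie) (Finsupp.single 0 u) x (k + 1)
        = Finsupp.single 0 (mul u (x k) + mul (x k) u) ∧
    (∀ m, 1 < m → qbr (gdB mul lie) (Finsupp.single 0 u) x k m = 0) ∧
    qbr (gdB mul lie) (Finsupp.single 0 u) x k 1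
        = mul (x k) u + k • (mul u (x k) + mul (x k) u) := by
  have hB0 : ∀ v : V, gdB mul lie 0 v = 0 := gdB_zero_left h1 h2 h3 h4
  have hBr : ∀ v : V, gdB mul lie v 0 = 0 := gdB_zero_right h1 h2 h3 h4
  rw [qbr_single_zero _ hB0]
  have hsum : ∀ p : ℕ,
      (x.sum fun n xn => (ldOp (V := V))^[n] (gdB mul lie u xn)) p
        = ∑ n ∈ x.support, (ldOp (V := V))^[n] (gdB mul lie u (x n)) p := by
    intro p; rw [Finsupp.sum_apply]; rfl
  have hle : ∀ n ∈ x.support, n ≤ k := by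
    intro n hn
    by_contra h
    exact Finsupp.mem_support_iff.mp hn (hx n (by omega))
  have hco := fun v => ldOp_iter_coeffs (gdB mul lie u v) (gdB_apply_big u v)
  -- vanishing of off-diagonal terms (coordinate level, coordinate ≠ 0)
  have hz : ∀ m, m ≠ 0 → ∀ n ∈ x.support, n ≠ k →
      ((ldOp (V := V))^[n] (gdB mul lie u (x n))) k m = 0 := by
    intro m hm n hn hne
    have hnk : n < k := lt_of_le_of_ne (hle n hn) hne
    rcases Nat.lt_or_ge (n + 1) k with h | h
    · rw [(hco (x n) n).1 k (by omega), Finsupp.zero_apply]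
    · have hk : k = n + 1 := by omega
      rw [hk, (hco (x n) n).2.1, gdB_apply_one,
        Finsupp.single_eq_of_ne (by omega)]
  refine ⟨?_, ?_, ?_⟩
  · rw [hsum]
    rw [Finset.sum_eq_single k
      (fun n hn hne => (hco (x n) n).1 (k + 1)
        (by have := lt_of_le_of_ne (hle n hn) hne; omega))
      (fun hk => by
        rw [Finsupp.notMem_support_iff.mp hk, hBr, ldOp_iter_zero,
          Finsupp.zero_apply])]
    rw [(hco (x k) k).2.1, gdB_apply_one]
  · intro m hm
    rw [hsum k, Finset.sum_apply']
    rw [Finset.sum_eq_single k (fun n hn hne => hz m (by omega) n hn hne)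
      (fun hk => by
        rw [Finsupp.notMem_support_iff.mp hk, hBr, ldOp_iter_zero]
        simp)]
    rw [(hco (x k) k).2.2, gdB_apply_zero, gdB_apply_one, Dop_single]
    rw [Finsupp.add_apply, Finsupp.add_apply, Finsupp.smul_apply,
      Finsupp.single_eq_of_ne' (by omega : (1 : ℕ) ≠ m),
      Finsupp.single_eq_of_ne' (by omega : (0 : ℕ) ≠ m),
      Finsupp.single_eq_of_ne' (by omega : (1 : ℕ) ≠ m)]
    simp
  · rw [hsum k, Finset.sum_apply']
    rw [Finset.sum_eq_single k (fun n hn hne => hz 1 one_ne_zero n hn hne)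
      (fun hk => by
        rw [Finsupp.notMem_support_iff.mp hk, hBr, ldOp_iter_zero]
        simp [h1, h2])]
    rw [(hco (x k) k).2.2, gdB_apply_zero, gdB_apply_one, Dop_single]
    rw [Finsupp.add_apply, Finsupp.add_apply, Finsupp.smul_apply,
      Finsupp.single_eq_same, Finsupp.single_eq_of_ne' (by omega : (0 : ℕ) ≠ 1),
      Finsupp.single_eq_same]
    simp

end GdB

end Helpers

/-- if `(V,∘,[·,·])` is a Gel'fand-Dorfman bialgebra with `(V,∘)`
a simple Novikov algebra and `V = V∗V` (the span of all `a∘b + b∘a`), then the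
corresponding quadratic Lie conformal algebra `R = ℂ[∂]V` is simple. -/
theorem stmt_5 {V : Type} [AddCommGroup V] [Module ℂ V] (mul lie : V → V → V)
    (hGD : IsGD mul lie) (hsimple : NovikovSimple mul)
    (hspan : Submodule.span ℂ {x : V | ∃ a b : V, x = mul a b + mul b a} = ⊤) :
    ConfSimple (gdB mul lie) := by
  obtain ⟨hNov, hLieA, -⟩ := hGD
  have hm := hNov.1
  have hl := hLieA.1
  have m0l : ∀ z : V, mul 0 z = 0 := fun z => by
    have h := hm.2.2.1 0 0 z; simpa using h
  have m0r : ∀ z : V, mul z 0 = 0 := fun z => by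
    have h := hm.2.2.2 0 z 0; simpa using h
  have l0l : ∀ z : V, lie 0 z = 0 := fun z => by
    have h := hl.2.2.1 0 0 z; simpa using h
  have l0r : ∀ z : V, lie z 0 = 0 := fun z => by
    have h := hl.2.2.2 0 z 0; simpa using h
  have key := qbr_key (mul := mul) (lie := lie) m0l m0r l0l l0r
  constructor
  · -- nontriviality
    obtain ⟨a, b, hab⟩ := hsimple.1
    refine ⟨Finsupp.single 0 b, Finsupp.single 0 a, fun h => hab ?_⟩
    have h0 : qbr (gdB mul lie) (Finsupp.single 0 b) (Finsupp.single 0 a)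
        = gdB mul lie b a := by
      rw [qbr_single_zero _ (gdB_zero_left m0l m0r l0l l0r)]
      rw [Finsupp.sum_single_index
        (by rw [gdB_zero_right m0l m0r l0l l0r, ldOp_iter_zero])]
      rfl
    have h1 : gdB mul lie b a = 0 := h0 ▸ h
    have h2 := congrArg (fun P : LP V => P 0 1) h1
    simp only [gdB_apply_zero, Finsupp.add_apply, Finsupp.single_eq_same,
      Finsupp.single_eq_of_ne' (by omega : (0 : ℕ) ≠ 1), add_zero,
      Finsupp.coe_zero, Pi.zero_apply] at h2
    exact h2
  · intro I hI
    by_cases hbot : I = ⊥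
    · exact Or.inl hbot
    refine Or.inr ?_
    -- the submodule of "top coefficients" of elements of I
    let K : Submodule ℂ V :=
      { carrier := {v | ∃ k : ℕ, ∃ x ∈ I, (∀ m, k < m → x m = 0) ∧ x k = v}
        add_mem' := by
          rintro v w ⟨k, x, hxI, hxt, rfl⟩ ⟨l, y, hyI, hyt, rfl⟩
          refine ⟨max k l, Dop^[max k l - k] x + Dop^[max k l - l] y,
            I.add_mem (Dop_iter_mem hI.1 hxI _) (Dop_iter_mem hI.1 hyI _),
            ?_, ?_⟩
          · intro m hm
            rw [Finsupp.add_apply, Dop_iter_apply, Dop_iter_apply,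
              if_pos (by omega), if_pos (by omega),
              hxt _ (by omega), hyt _ (by omega), add_zero]
          · rw [Finsupp.add_apply, Dop_iter_apply, Dop_iter_apply,
              if_pos (by omega), if_pos (by omega)]
            congr 2 <;> omega
        zero_mem' := ⟨0, 0, I.zero_mem, by simp, rfl⟩
        smul_mem' := by
          rintro c v ⟨k, x, hxI, hxt, rfl⟩
          exact ⟨k, c • x, I.smul_mem c hxI,
            fun m hm => by rw [Finsupp.smul_apply, hxt m hm, smul_zero],
            by rw [Finsupp.smul_apply]⟩ }
    have hmemK : ∀ v : V,
        v ∈ K ↔ ∃ k : ℕ, ∃ x ∈ I, (∀ m, k < m → x m = 0) ∧ x k = v :=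
      fun v => Iff.rfl
    -- K is a Novikov ideal
    have hKid : IsNovikovIdeal mul K := by
      intro v hv u
      obtain ⟨k, x, hxI, hxt, hxk⟩ := (hmemK v).mp hv
      obtain ⟨e1, e2, e3⟩ := key u x k hxt
      have hs : mul u v + mul v u ∈ K := by
        refine (hmemK _).mpr
          ⟨0, _, hI.2 (Finsupp.single 0 u) x hxI (k + 1), ?_, ?_⟩
        · intro m hm; rw [e1, Finsupp.single_eq_of_ne (by omega)]
        · rw [e1, Finsupp.single_eq_same, hxk]
      have hvk : mul v u + k • (mul u v + mul v u) ∈ K :=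
        (hmemK _).mpr ⟨1, _, hI.2 (Finsupp.single 0 u) x hxI k, e2,
          by rw [e3, hxk]⟩
      have hvu : mul v u ∈ K := by
        have h' := K.sub_mem hvk (nsmul_mem hs k)
        simpa using h'
      exact ⟨hvu, by simpa using K.sub_mem hs hvu⟩
    -- K is nonzero, hence K = ⊤ by simplicity
    have hKne : K ≠ ⊥ := by
      obtain ⟨x, hxI, hx0⟩ := Submodule.exists_mem_ne_zero_of_ne_bot hbot
      have hsupp : x.support.Nonempty := Finsupp.support_nonempty_iff.mpr hx0
      set k := x.support.max' hsupp with hk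
      have hxk : x k ≠ 0 :=
        Finsupp.mem_support_iff.mp (x.support.max'_mem hsupp)
      intro hKbot
      apply hxk
      have hmem : x k ∈ K := (hmemK _).mpr ⟨k, x, hxI,
        fun m hm => Finsupp.notMem_support_iff.mp
          (fun hms => absurd (Finset.le_max' _ _ hms) (by omega)), rfl⟩
      rw [hKbot] at hmem
      simpa using hmem
    have hKtop : K = ⊤ := (hsimple.2 K hKid).resolve_left hKne
    -- all degree-zero elements of the form a∗b lie in I
    have hsingle : ∀ a b : V, Finsupp.single 0 (mul a b + mul b a) ∈ I := by
      intro a b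
      have hbK : b ∈ K := hKtop ▸ Submodule.mem_top
      obtain ⟨k, x, hxI, hxt, hxk⟩ := (hmemK b).mp hbK
      obtain ⟨e1, -, -⟩ := key a x k hxt
      have h' := hI.2 (Finsupp.single 0 a) x hxI (k + 1)
      rw [e1, hxk] at h'
      exact h'
    -- hence all degree-zero elements lie in I
    have hJ : ∀ v : V, Finsupp.single 0 v ∈ I := by
      intro v
      have hsub : Submodule.span ℂ {x : V | ∃ a b : V, x = mul a b + mul b a}
          ≤ Submodule.comap (Finsupp.lsingle (M := V) (R := ℂ) 0) I := by
        rw [Submodule.span_le]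
        rintro w ⟨a, b, rfl⟩
        exact hsingle a b
      have h' := hsub (hspan ▸ Submodule.mem_top : v ∈ _)
      simpa using h'
    -- conclude I = ⊤
    have hall : ∀ x : Conf V, x ∈ I := by
      intro x
      induction x using Finsupp.induction with
      | zero => exact I.zero_mem
      | single_add a b f _ _ ih =>
        refine I.add_mem ?_ ih
        rw [← Dop_iter_single a b]
        exact Dop_iter_mem hI.1 (hJ b) a
    exact eq_top_iff.mpr fun x _ => hall x
end

section
/- The algebra A_1, the ℂ-vector space with basis {L_i : i ∈ ℤ, i ≥ −1} and product L_i ∘ L_j = (j+1) L_{i+j}, is a simple Novikov algebra. -/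
set_option maxSynthPendingDepth 3

open QLCA

/-- The basis vector `L_n` of `A₁` for `n ≥ -1` (and `0` for `n < -1`). -/
noncomputable def sL (n : ℤ) : {i : ℤ // (-1 : ℤ) ≤ i} →₀ ℂ :=
  if h : (-1 : ℤ) ≤ n then Finsupp.single ⟨n, h⟩ 1 else 0

/-- The Novikov product of `A₁`: `L_i ∘ L_j = (j+1) L_{i+j}`, extended
bilinearly. -/
noncomputable def A1mul (u v : {i : ℤ // (-1 : ℤ) ≤ i} →₀ ℂ) :
    {i : ℤ // (-1 : ℤ) ≤ i} →₀ ℂ :=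
  Finsupp.sum u fun i ui => Finsupp.sum v fun j vj =>
    (ui * vj * ((j.1 : ℂ) + 1)) • sL (i.1 + j.1)

abbrev Vb := {i : ℤ // (-1 : ℤ) ≤ i} →₀ ℂ

noncomputable def inr (i : {i : ℤ // (-1:ℤ) ≤ i}) : Vb →ₗ[ℂ] Vb :=
  Finsupp.lsum ℂ fun j => LinearMap.toSpanSingleton ℂ Vb (((j.1:ℂ)+1) • sL (i.1 + j.1))

noncomputable def Mb : Vb →ₗ[ℂ] Vb →ₗ[ℂ] Vb :=
  Finsupp.lsum ℂ fun i => LinearMap.toSpanSingleton ℂ (Vb →ₗ[ℂ] Vb) (inr i)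

lemma single_eq_smul_sL (i : {i : ℤ // (-1:ℤ) ≤ i}) (a : ℂ) :
    Finsupp.single i a = a • sL i.1 := by
  rw [sL, dif_pos i.2]
  simp [Finsupp.smul_single]

lemma Mb_single (i : {i : ℤ // (-1:ℤ) ≤ i}) (a : ℂ) :
    Mb (Finsupp.single i a) = a • inr i := by
  simp [Mb, Finsupp.lsum_single, LinearMap.toSpanSingleton_apply]

lemma inr_single (i j : {i : ℤ // (-1:ℤ) ≤ i}) (b : ℂ) :
    inr i (Finsupp.single j b) = b • (((j.1:ℂ)+1) • sL (i.1 + j.1)) := by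
  simp [inr, Finsupp.lsum_single, LinearMap.toSpanSingleton_apply]

lemma A1mul_eq (u v : Vb) : A1mul u v = Mb u v := by
  rw [A1mul, Mb]
  rw [Finsupp.lsum_apply]
  simp only [Finsupp.sum, LinearMap.sum_apply]
  apply Finset.sum_congr rfl
  intro i _
  rw [LinearMap.toSpanSingleton_apply, LinearMap.smul_apply, inr, Finsupp.lsum_apply]
  simp only [Finsupp.sum, LinearMap.sum_apply, Finset.smul_sum]
  apply Finset.sum_congr rfl
  intro j _
  rw [LinearMap.toSpanSingleton_apply, smul_smul, smul_smul, mul_assoc]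

lemma Mb_sL {m n : ℤ} (hm : (-1:ℤ) ≤ m) (hn : (-1:ℤ) ≤ n) :
    Mb (sL m) (sL n) = ((n:ℂ)+1) • sL (m+n) := by
  rw [sL, dif_pos hm, sL, dif_pos hn, Mb_single, LinearMap.smul_apply, inr_single]
  simp

lemma Mb_sL_zero_left {m : ℤ} (hm : m < -1) (x : Vb) : Mb (sL m) x = 0 := by
  rw [sL, dif_neg (by omega)]
  simp

lemma Mb_sL_sL_sL {i j k : ℤ} (hi : (-1:ℤ) ≤ i) (hj : (-1:ℤ) ≤ j) (hk : (-1:ℤ) ≤ k) :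
    Mb (Mb (sL i) (sL j)) (sL k) = (((j:ℂ)+1) * ((k:ℂ)+1)) • sL (i+j+k) := by
  rw [Mb_sL hi hj, map_smul, LinearMap.smul_apply]
  by_cases h : (-1:ℤ) ≤ i + j
  · rw [Mb_sL h hk, smul_smul]
  · have hi' : i = -1 ∧ j = -1 := by omega
    obtain ⟨rfl, rfl⟩ := hi'
    norm_num

lemma Mb_sL_sL_sL' {i j k : ℤ} (hi : (-1:ℤ) ≤ i) (hj : (-1:ℤ) ≤ j) (hk : (-1:ℤ) ≤ k) :
    Mb (sL i) (Mb (sL j) (sL k)) = (((k:ℂ)+1) * ((j:ℂ)+(k:ℂ)+1)) • sL (i+j+k) := by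
  rw [Mb_sL hj hk, map_smul]
  by_cases h : (-1:ℤ) ≤ j + k
  · rw [Mb_sL hi h, smul_smul]
    have h1 : i + (j + k) = i + j + k := by ring
    have h2 : (((j+k : ℤ)):ℂ) + 1 = (j:ℂ)+(k:ℂ)+1 := by push_cast; ring
    rw [h1, h2]
  · have hi' : j = -1 ∧ k = -1 := by omega
    obtain ⟨rfl, rfl⟩ := hi'
    norm_num

lemma id1_sL {i j k : ℤ} (hi : (-1:ℤ) ≤ i) (hj : (-1:ℤ) ≤ j) (hk : (-1:ℤ) ≤ k) :
    Mb (Mb (sL i) (sL j)) (sL k) - Mb (sL i) (Mb (sL j) (sL k))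
      = Mb (Mb (sL j) (sL i)) (sL k) - Mb (sL j) (Mb (sL i) (sL k)) := by
  rw [Mb_sL_sL_sL hi hj hk, Mb_sL_sL_sL' hi hj hk, Mb_sL_sL_sL hj hi hk,
    Mb_sL_sL_sL' hj hi hk]
  have h : j + i + k = i + j + k := by ring
  rw [h, ← sub_smul, ← sub_smul]
  congr 1
  ring

lemma id2_sL {i j k : ℤ} (hi : (-1:ℤ) ≤ i) (hj : (-1:ℤ) ≤ j) (hk : (-1:ℤ) ≤ k) :
    Mb (Mb (sL i) (sL j)) (sL k) = Mb (Mb (sL i) (sL k)) (sL j) := by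
  rw [Mb_sL_sL_sL hi hj hk, Mb_sL_sL_sL hi hk hj]
  have h : i + k + j = i + j + k := by ring
  rw [h]
  congr 1
  ring

noncomputable def T1 : Vb →ₗ[ℂ] Vb →ₗ[ℂ] (Vb →ₗ[ℂ] Vb) :=
  LinearMap.mk₂ ℂ (fun a b => Mb (Mb a b) - (Mb a) ∘ₗ (Mb b))
    (fun a a' b => by
      simp only [map_add, LinearMap.add_apply, LinearMap.add_comp]
      abel)
    (fun c a b => by
      refine LinearMap.ext fun v => ?_
      simp [map_smul, smul_sub])
    (fun a b b' => by
      simp only [map_add, LinearMap.add_apply, LinearMap.comp_add]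
      abel)
    (fun c a b => by
      refine LinearMap.ext fun v => ?_
      simp [map_smul, smul_sub])

lemma id1 (a b c : Vb) :
    Mb (Mb a b) c - Mb a (Mb b c) = Mb (Mb b a) c - Mb b (Mb a c) := by
  have h : T1 = T1.flip := by
    apply Finsupp.lhom_ext
    intro i x
    apply Finsupp.lhom_ext
    intro j y
    apply Finsupp.lhom_ext
    intro k z
    rw [LinearMap.flip_apply]
    simp only [single_eq_smul_sL, map_smul, LinearMap.smul_apply, T1, LinearMap.mk₂_apply,
      LinearMap.sub_apply, LinearMap.comp_apply]
    rw [id1_sL i.2 j.2 k.2]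
    rw [smul_comm x y]
  have := congrArg (fun f => f a b c) h
  simpa [T1, LinearMap.flip_apply, LinearMap.sub_apply, LinearMap.comp_apply] using this

noncomputable def T2 : Vb →ₗ[ℂ] Vb →ₗ[ℂ] (Vb →ₗ[ℂ] Vb) :=
  LinearMap.mk₂ ℂ (fun a b => Mb (Mb a b))
    (fun a a' b => by simp only [map_add, LinearMap.add_apply])
    (fun c a b => by simp only [map_smul, LinearMap.smul_apply])
    (fun a b b' => by simp only [map_add, LinearMap.add_apply])
    (fun c a b => by simp only [map_smul, LinearMap.smul_apply])

noncomputable def T2' : Vb →ₗ[ℂ] Vb →ₗ[ℂ] (Vb →ₗ[ℂ] Vb) :=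
  LinearMap.mk₂ ℂ (fun a b => (Mb.flip b) ∘ₗ (Mb a))
    (fun a a' b => by simp only [map_add, LinearMap.comp_add])
    (fun c a b => by simp only [map_smul, LinearMap.comp_smul])
    (fun a b b' => by simp only [map_add, LinearMap.add_comp])
    (fun c a b => by simp only [map_smul, LinearMap.smul_comp])

lemma id2 (a b c : Vb) : Mb (Mb a b) c = Mb (Mb a c) b := by
  have h : T2 = T2' := by
    apply Finsupp.lhom_ext
    intro i x
    apply Finsupp.lhom_ext
    intro j y
    apply Finsupp.lhom_ext
    intro k z
    simp only [single_eq_smul_sL, map_smul, LinearMap.smul_apply, T2, T2', LinearMap.mk₂_apply,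
      LinearMap.comp_apply, LinearMap.flip_apply]
    rw [id2_sL i.2 j.2 k.2]
  have := congrArg (fun f => f a b c) h
  simpa [T2, T2', LinearMap.flip_apply, LinearMap.comp_apply] using this

lemma sL_coe (j : {i : ℤ // (-1:ℤ) ≤ i}) : sL j.1 = Finsupp.single j 1 := by
  rw [sL, dif_pos j.2]

lemma E_apply (x : Vb) (k : {i : ℤ // (-1:ℤ) ≤ i}) :
    (Mb (sL 0) x) k = ((k.1:ℂ)+1) * x k := by
  have h0 : (-1:ℤ) ≤ 0 := by norm_num
  rw [sL, dif_pos h0, Mb_single, one_smul, inr, Finsupp.lsum_apply, Finsupp.sum_apply]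
  have hcong : (Finsupp.sum x fun j d =>
      (LinearMap.toSpanSingleton ℂ Vb (((j.1:ℂ)+1) • sL (((⟨0,h0⟩:{i : ℤ // (-1:ℤ) ≤ i})).1 + j.1)) d) k)
      = Finsupp.sum x fun j d => if j = k then ((k.1:ℂ)+1)*d else 0 := by
    apply Finsupp.sum_congr
    intro j _
    rw [LinearMap.toSpanSingleton_apply]
    have : ((⟨0,h0⟩:{i : ℤ // (-1:ℤ) ≤ i})).1 + j.1 = j.1 := by simp
    rw [this, sL_coe j, Finsupp.smul_apply, Finsupp.smul_apply, Finsupp.single_apply]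
    by_cases h : j = k
    · subst h; simp; ring
    · simp [h]
  rw [hcong, Finsupp.sum_ite_eq']
  by_cases h : k ∈ x.support
  · rw [if_pos h]
  · rw [if_neg h]
    rw [Finsupp.notMem_support_iff.mp h]
    ring

section Ideal
variable {I : Submodule ℂ Vb}

lemma step_single (hI : ∀ a ∈ I, ∀ b : Vb, A1mul a b ∈ I ∧ A1mul b a ∈ I) :
    ∀ n : ℕ, ∀ x : Vb, x ∈ I → x ≠ 0 → x.support.card ≤ n →
      ∃ k : {i : ℤ // (-1:ℤ) ≤ i}, (Finsupp.single k 1 : Vb) ∈ I := by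
  intro n
  induction n with
  | zero =>
    intro x _ hx hc
    exact absurd (Finsupp.card_support_eq_zero.mp (Nat.le_zero.mp hc)) hx
  | succ n ih =>
    intro x hxI hx hc
    obtain ⟨k, hk⟩ := Finsupp.support_nonempty_iff.mpr hx
    set y : Vb := A1mul (sL 0) x - ((k.1:ℂ)+1) • x with hy
    have hyI : y ∈ I := sub_mem ((hI x hxI (sL 0)).2) (Submodule.smul_mem _ _ hxI)
    have hyapp : ∀ j, y j = ((j.1:ℂ) - (k.1:ℂ)) * x j := by
      intro j
      rw [hy, Finsupp.sub_apply, Finsupp.smul_apply, A1mul_eq, E_apply, smul_eq_mul]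
      ring
    by_cases hy0 : y = 0
    · refine ⟨k, ?_⟩
      have hxk0 : x k ≠ 0 := Finsupp.mem_support_iff.mp hk
      have hxk : x = Finsupp.single k (x k) := by
        ext j
        by_cases hj : j = k
        · subst hj; simp
        · have h1 := hyapp j
          rw [hy0] at h1
          have hj1 : j.1 ≠ k.1 := fun h => hj (Subtype.ext h)
          have hj2 : ((j.1:ℂ) - (k.1:ℂ)) ≠ 0 := by
            rw [sub_ne_zero]
            exact_mod_cast hj1
          have hxj : x j = 0 := by
            rcases mul_eq_zero.mp h1.symm with h | h
            · exact absurd h hj2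
            · exact h
          rw [hxj, Finsupp.single_apply, if_neg (Ne.symm hj)]
      obtain ⟨c, hc⟩ : ∃ c, x k = c := ⟨_, rfl⟩
      rw [hc] at hxk hxk0
      have hmem : c⁻¹ • x ∈ I := Submodule.smul_mem _ _ hxI
      rw [hxk] at hmem
      rwa [Finsupp.smul_single, smul_eq_mul, inv_mul_cancel₀ hxk0] at hmem
    · have hsub : y.support ⊆ x.support.erase k := by
        intro j hj
        rw [Finset.mem_erase]
        have hyj := Finsupp.mem_support_iff.mp hj
        rw [hyapp j] at hyj
        constructor
        · intro hjk
          subst hjk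
          simp at hyj
        · exact Finsupp.mem_support_iff.mpr (right_ne_zero_of_mul hyj)
      have hcard : y.support.card ≤ n := by
        have h1 : y.support.card ≤ (x.support.erase k).card := Finset.card_le_card hsub
        have h2 : (x.support.erase k).card = x.support.card - 1 := Finset.card_erase_of_mem hk
        have h3 : 1 ≤ x.support.card := Finset.card_pos.mpr ⟨k, hk⟩
        omega
      exact ih y hyI hy0 hcard

lemma lower (hI : ∀ a ∈ I, ∀ b : Vb, A1mul a b ∈ I ∧ A1mul b a ∈ I) :
    ∀ n : ℕ, ∀ i : ℤ, (-1:ℤ) ≤ i → (i+1).toNat = n → sL i ∈ I → sL (-1) ∈ I := by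
  intro n
  induction n with
  | zero =>
    intro i hi hn h
    have : i = -1 := by omega
    rwa [this] at h
  | succ n ih =>
    intro i hi hn h
    have hi0 : (0:ℤ) ≤ i := by omega
    have hm := (hI (sL i) h (sL (-1))).2
    rw [A1mul_eq, Mb_sL (le_refl (-1)) hi] at hm
    have hne : ((i:ℂ)+1) ≠ 0 := by
      have : ((i:ℂ)+1) = ((i+1 : ℤ):ℂ) := by push_cast; ring
      rw [this, Int.cast_ne_zero]
      omega
    have hmem : sL (-1+i) ∈ I := by
      have h2 := Submodule.smul_mem I ((i:ℂ)+1)⁻¹ hm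
      rwa [smul_smul, inv_mul_cancel₀ hne, one_smul] at h2
    exact ih (-1+i) (by omega) (by omega) hmem

lemma raise (hI : ∀ a ∈ I, ∀ b : Vb, A1mul a b ∈ I ∧ A1mul b a ∈ I)
    (h : sL (-1) ∈ I) : ∀ i : ℤ, (-1:ℤ) ≤ i → sL i ∈ I := by
  intro i hi
  have hm := (hI (sL (-1)) h (sL (i+1))).1
  rw [A1mul_eq, Mb_sL (le_refl (-1)) (by omega)] at hm
  have harg : (-1) + (i+1) = i := by ring
  rw [harg] at hm
  have hne : (((i+1:ℤ):ℂ)+1) ≠ 0 := by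
    have : (((i+1:ℤ):ℂ)+1) = ((i+2 : ℤ):ℂ) := by push_cast; ring
    rw [this, Int.cast_ne_zero]
    omega
  have h2 := Submodule.smul_mem I (((i+1:ℤ):ℂ)+1)⁻¹ hm
  rwa [smul_smul, inv_mul_cancel₀ hne, one_smul] at h2

lemma ideal_top (hI : ∀ a ∈ I, ∀ b : Vb, A1mul a b ∈ I ∧ A1mul b a ∈ I)
    (hne : I ≠ ⊥) : I = ⊤ := by
  obtain ⟨x, hxI, hx⟩ := Submodule.exists_mem_ne_zero_of_ne_bot hne
  obtain ⟨k, hk⟩ := step_single hI x.support.card x hxI hx le_rfl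
  have hsLk : sL k.1 ∈ I := by rwa [sL_coe]
  have hm1 : sL (-1) ∈ I := lower hI (k.1+1).toNat k.1 k.2 rfl hsLk
  have hall := raise hI hm1
  rw [Submodule.eq_top_iff']
  intro x
  induction x using Finsupp.induction with
  | zero => exact zero_mem I
  | single_add a b f _ _ hf =>
    refine add_mem ?_ hf
    rw [single_eq_smul_sL]
    exact Submodule.smul_mem _ _ (hall a.1 a.2)

end Ideal

/-- `A₁` is a simple Novikov algebra. -/
theorem stmt_9 : IsNovikov A1mul ∧ NovikovSimple A1mul := by
  constructor
  · refine ⟨⟨?_, ?_, ?_, ?_⟩, ?_, ?_⟩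
    · intro x y z; simp [A1mul_eq, map_add]
    · intro x y z; simp [A1mul_eq, map_add]
    · intro c x y; simp [A1mul_eq, map_smul]
    · intro c x y; simp [A1mul_eq, map_smul]
    · intro a b c; simp only [A1mul_eq]; exact id1 a b c
    · intro a b c; simp only [A1mul_eq]; exact id2 a b c
  · constructor
    · refine ⟨sL 0, sL 0, ?_⟩
      rw [A1mul_eq, Mb_sL (by norm_num) (by norm_num)]
      have h0 : ((-1:ℤ) ≤ 0+0) := by norm_num
      rw [sL, dif_pos h0]
      simp only [Int.cast_zero, zero_add, one_smul]
      exact fun h => one_ne_zero (Finsupp.single_eq_zero.mp h)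
    · intro I hI
      by_cases h : I = ⊥
      · left; exact h
      · right; exact ideal_top (fun a ha b => hI a ha b) h
end

section
/- Let [·,·] be any Lie bracket on A_1 such that (A_1,∘,[·,·]) is a Gel'fand-Dorfman bialgebra. Then there exists c ∈ ℂ such that [L_i, L_j] = c(i−j) L_{i+j} for all i,j ≥ −1. -/
set_option maxSynthPendingDepth 3

open QLCA

namespace S11
abbrev Idx := {i : ℤ // (-1 : ℤ) ≤ i}
abbrev W := Idx →₀ ℂ

noncomputable def cf (m : ℤ) (x : W) : ℂ := if h : (-1:ℤ) ≤ m then x ⟨m, h⟩ else 0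

lemma cf_add (m : ℤ) (x y : W) : cf m (x + y) = cf m x + cf m y := by
  unfold cf; split <;> simp

lemma cf_smul (m : ℤ) (c : ℂ) (x : W) : cf m (c • x) = c * cf m x := by
  unfold cf; split <;> simp

lemma cf_neg (m : ℤ) (x : W) : cf m (-x) = - cf m x := by
  unfold cf; split <;> simp

lemma cf_sub (m : ℤ) (x y : W) : cf m (x - y) = cf m x - cf m y := by
  unfold cf; split <;> simp

lemma cf_zero (m : ℤ) : cf m (0 : W) = 0 := by
  unfold cf; split <;> simp

lemma cf_bot {m : ℤ} (h : ¬ (-1:ℤ) ≤ m) (x : W) : cf m x = 0 := by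
  unfold cf; rw [dif_neg h]

lemma cf_sL (m p : ℤ) : cf m (sL p) = if p = m ∧ (-1:ℤ) ≤ m then 1 else 0 := by
  unfold cf sL
  by_cases hm : (-1:ℤ) ≤ m
  · rw [dif_pos hm]
    by_cases hp : (-1:ℤ) ≤ p
    · rw [dif_pos hp, Finsupp.single_apply]
      by_cases hpm : p = m
      · simp [hpm, hm]
      · simp [hpm, Subtype.ext_iff]
    · rw [dif_neg hp]
      have : ¬ (p = m) := fun h => hp (h ▸ hm)
      simp [this]
  · simp [hm]

lemma cf_ext {x y : W} (h : ∀ m, cf m x = cf m y) : x = y := by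
  ext ⟨m, hm⟩
  have := h m
  unfold cf at this
  rwa [dif_pos hm, dif_pos hm] at this

lemma sL_def {p : ℤ} (h : (-1:ℤ) ≤ p) : sL p = Finsupp.single ⟨p, h⟩ 1 := dif_pos h

lemma sL_bot {p : ℤ} (h : ¬ (-1:ℤ) ≤ p) : sL p = 0 := dif_neg h

lemma mul_single_single (i j : Idx) (c d : ℂ) :
    A1mul (Finsupp.single i c) (Finsupp.single j d)
      = (c * d * ((j.1 : ℂ) + 1)) • sL (i.1 + j.1) := by
  unfold A1mul
  rw [Finsupp.sum_single_index, Finsupp.sum_single_index]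
  · simp
  · simp [Finsupp.sum_single_index]

lemma mul_sL_sL {i j : ℤ} (hi : (-1:ℤ) ≤ i) (hj : (-1:ℤ) ≤ j) :
    A1mul (sL i) (sL j) = ((j : ℂ) + 1) • sL (i + j) := by
  rw [sL_def hi, sL_def hj, mul_single_single]
  norm_num

lemma cf_finsupp_sum (m : ℤ) (x : W) (g : Idx → ℂ → W) :
    cf m (x.sum g) = x.sum fun i c => cf m (g i c) := by
  unfold cf
  split
  · rw [Finsupp.sum, Finsupp.finset_sum_apply]; rfl
  · simp [Finsupp.sum]

lemma cf_mul_right (x : W) (j : Idx) (m : ℤ) :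
    cf m (A1mul x (Finsupp.single j 1)) = ((j.1 : ℂ) + 1) * cf (m - j.1) x := by
  have hrw : A1mul x (Finsupp.single j 1)
      = x.sum fun i ui => (ui * ((j.1:ℂ) + 1)) • sL (i.1 + j.1) := by
    unfold A1mul
    refine Finsupp.sum_congr fun i _ => ?_
    rw [Finsupp.sum_single_index] <;> simp
  rw [hrw, cf_finsupp_sum]
  simp only [cf_smul, cf_sL]
  by_cases hm : (-1:ℤ) ≤ m
  · by_cases hmj : (-1:ℤ) ≤ m - j.1
    · have hrw2 : (x.sum fun i ui => (ui * ((j.1:ℂ)+1)) * (if i.1 + j.1 = m ∧ (-1:ℤ) ≤ m then 1 else 0))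
          = x.sum fun i ui => if i = (⟨m - j.1, hmj⟩ : Idx) then ui * ((j.1:ℂ)+1) else 0 := by
        refine Finsupp.sum_congr fun i _ => ?_
        have : (i.1 + j.1 = m ∧ (-1:ℤ) ≤ m) ↔ i = (⟨m - j.1, hmj⟩ : Idx) := by
          rw [Subtype.ext_iff]
          constructor
          · rintro ⟨h1, _⟩; simp; omega
          · intro h; simp at h; omega
        rw [if_congr this rfl rfl]
        split_ifs <;> ring
      rw [hrw2, Finsupp.sum_ite_eq']
      unfold cf
      rw [dif_pos hmj]
      by_cases hs : (⟨m - j.1, hmj⟩ : Idx) ∈ x.support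
      · rw [if_pos hs]; ring
      · rw [if_neg hs, Finsupp.notMem_support_iff.mp hs]; ring
    · have h0 : (x.sum fun i ui => (ui * ((j.1:ℂ)+1)) * (if i.1 + j.1 = m ∧ (-1:ℤ) ≤ m then 1 else 0)) = 0 := by
        apply Finset.sum_eq_zero; intro i _
        have : ¬ (i.1 + j.1 = m ∧ (-1:ℤ) ≤ m) := by
          rintro ⟨h1, _⟩; have := i.2; omega
        simp only [if_neg this]; ring
      rw [h0, cf_bot hmj]; ring
  · have h0 : (x.sum fun i ui => (ui * ((j.1:ℂ)+1)) * (if i.1 + j.1 = m ∧ (-1:ℤ) ≤ m then 1 else 0)) = 0 := by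
      apply Finset.sum_eq_zero; intro i _
      simp only [hm, and_false, if_false]; ring
    rw [h0]
    by_cases hmj : (-1:ℤ) ≤ m - j.1
    · have hj : j.1 = -1 := by have := j.2; omega
      rw [hj]; norm_num
    · rw [cf_bot hmj]; ring

lemma cf_mul_left (i : Idx) (y : W) (m : ℤ) :
    cf m (A1mul (Finsupp.single i 1) y) = ((m : ℂ) - i.1 + 1) * cf (m - i.1) y := by
  have hrw : A1mul (Finsupp.single i 1) y
      = y.sum fun j vj => (vj * ((j.1:ℂ) + 1)) • sL (i.1 + j.1) := by
    unfold A1mul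
    rw [Finsupp.sum_single_index]
    · refine Finsupp.sum_congr fun j _ => ?_
      ring_nf
    · simp
  rw [hrw, cf_finsupp_sum]
  simp only [cf_smul, cf_sL]
  by_cases hm : (-1:ℤ) ≤ m
  · by_cases hmi : (-1:ℤ) ≤ m - i.1
    · have hrw2 : (y.sum fun j vj => (vj * ((j.1:ℂ)+1)) * (if i.1 + j.1 = m ∧ (-1:ℤ) ≤ m then 1 else 0))
          = y.sum fun j vj => if j = (⟨m - i.1, hmi⟩ : Idx) then vj * ((j.1:ℂ)+1) else 0 := by
        refine Finsupp.sum_congr fun j _ => ?_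
        have : (i.1 + j.1 = m ∧ (-1:ℤ) ≤ m) ↔ j = (⟨m - i.1, hmi⟩ : Idx) := by
          rw [Subtype.ext_iff]
          constructor
          · rintro ⟨h1, _⟩; simp; omega
          · intro h; simp at h; omega
        rw [if_congr this rfl rfl]
        split_ifs <;> ring
      rw [hrw2, Finsupp.sum_ite_eq']
      unfold cf
      rw [dif_pos hmi]
      by_cases hs : (⟨m - i.1, hmi⟩ : Idx) ∈ y.support
      · rw [if_pos hs]; push_cast; ring
      · rw [if_neg hs, Finsupp.notMem_support_iff.mp hs]; ring
    · have h0 : (y.sum fun j vj => (vj * ((j.1:ℂ)+1)) * (if i.1 + j.1 = m ∧ (-1:ℤ) ≤ m then 1 else 0)) = 0 := by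
        apply Finset.sum_eq_zero; intro j _
        have : ¬ (i.1 + j.1 = m ∧ (-1:ℤ) ≤ m) := by
          rintro ⟨h1, _⟩; have := j.2; omega
        simp only [if_neg this]; ring
      rw [h0, cf_bot hmi]; ring
  · have h0 : (y.sum fun j vj => (vj * ((j.1:ℂ)+1)) * (if i.1 + j.1 = m ∧ (-1:ℤ) ≤ m then 1 else 0)) = 0 := by
      apply Finset.sum_eq_zero; intro j _
      simp only [hm, and_false, if_false]; ring
    rw [h0]
    by_cases hmi : (-1:ℤ) ≤ m - i.1
    · have : m - i.1 = -1 := by have := i.2; omega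
      have hmc : ((m:ℂ) - i.1 + 1) = 0 := by
        have : (m : ℂ) - i.1 = -1 := by
          have := congrArg (fun z : ℤ => (z : ℂ)) this
          push_cast at this; linear_combination this
        rw [this]; ring
      rw [hmc]; ring
    · rw [cf_bot hmi]; ring



noncomputable def ff (lie : W → W → W) (i j m : ℤ) : ℂ := cf m (lie (sL i) (sL j))

lemma cf_mul_right' (x : W) {k : ℤ} (hk : (-1:ℤ) ≤ k) (m : ℤ) :
    cf m (A1mul x (sL k)) = ((k:ℂ) + 1) * cf (m - k) x := by
  rw [sL_def hk]; exact cf_mul_right x ⟨k, hk⟩ m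

lemma cf_mul_left' {i : ℤ} (hi : (-1:ℤ) ≤ i) (y : W) (m : ℤ) :
    cf m (A1mul (sL i) y) = ((m : ℂ) - (i:ℂ) + 1) * cf (m - i) y := by
  rw [sL_def hi]; exact cf_mul_left ⟨i, hi⟩ y m

section Main
variable (lie : W → W → W)

lemma ff_skew (hGD : IsGD A1mul lie) (i j m : ℤ) : ff lie i j m = - ff lie j i m := by
  unfold ff
  rw [hGD.2.1.2.1 (sL i) (sL j), cf_neg]

lemma ff_diag (hGD : IsGD A1mul lie) (i m : ℤ) : ff lie i i m = 0 := by
  have h := ff_skew lie hGD i i m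
  linear_combination h / 2

lemma ff_botm (hm : ¬ (-1:ℤ) ≤ m) (i j : ℤ) : ff lie i j m = 0 := cf_bot hm _

lemma ff_boti (hGD : IsGD A1mul lie) {i : ℤ} (hi : ¬ (-1:ℤ) ≤ i) (j m : ℤ) :
    ff lie i j m = 0 := by
  unfold ff
  rw [sL_bot hi]
  have hb := hGD.2.1.1.2.2.1 (0:ℂ) (0 : W) (sL j)
  simp only [zero_smul] at hb
  rw [hb, cf_zero]

lemma ff_botj (hGD : IsGD A1mul lie) {j : ℤ} (hj : ¬ (-1:ℤ) ≤ j) (i m : ℤ) :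
    ff lie i j m = 0 := by
  unfold ff
  rw [sL_bot hj]
  have hb := hGD.2.1.1.2.2.2 (0:ℂ) (sL i) (0 : W)
  simp only [zero_smul] at hb
  rw [hb, cf_zero]

lemma gdc (hGD : IsGD A1mul lie) {i j k : ℤ}
    (hi : (-1:ℤ) ≤ i) (hj : (-1:ℤ) ≤ j) (hk : (-1:ℤ) ≤ k) (m : ℤ) :
    ((j:ℂ)+1) * ff lie (i+j) k m - ((k:ℂ)+1) * ff lie (i+k) j m
      + ((k:ℂ)+1) * ff lie i j (m-k) - ((j:ℂ)+1) * ff lie i k (m-j)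
      - ((m:ℂ) - (i:ℂ) + 1) * ff lie j k (m-i) = 0 := by
  obtain ⟨hnov, hlie, hcomp⟩ := hGD
  have hbil := hlie.1
  have e0 := congrArg (cf m) (hcomp (sL i) (sL j) (sL k))
  rw [cf_zero] at e0
  rw [cf_sub, cf_sub, cf_add, cf_sub] at e0
  rw [mul_sL_sL hi hj, mul_sL_sL hi hk] at e0
  rw [hbil.2.2.1, hbil.2.2.1] at e0
  rw [cf_smul, cf_smul] at e0
  rw [cf_mul_right' _ hk, cf_mul_right' _ hj, cf_mul_left' hi] at e0
  unfold ff
  linear_combination e0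

lemma stepA (hGD : IsGD A1mul lie) {j : ℤ} (hj : (-1:ℤ) ≤ j) (m : ℤ) (hmj : m ≠ j) :
    ff lie j 0 m = 0 := by
  have h := gdc lie hGD (i := 0) (j := j) (k := 0) (by norm_num) hj (by norm_num) m
  simp only [zero_add, add_zero, sub_zero] at h
  have hd := ff_diag lie hGD 0 (m - j)
  have key : ((j:ℂ) - (m:ℂ)) * ff lie j 0 m = 0 := by
    push_cast at h
    linear_combination h + ((j:ℂ)+1) * hd
  rcases mul_eq_zero.mp key with h' | h'
  · exfalso
    apply hmj
    have : (m:ℂ) = (j:ℂ) := by linear_combination -h'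
    exact_mod_cast this
  · exact h'

lemma stepBrec (hGD : IsGD A1mul lie) {i : ℤ} (hi : (-1:ℤ) ≤ i) :
    ff lie (i+1) 0 (i+1) = ff lie i 0 i + ff lie 1 0 1 := by
  have h := gdc lie hGD (i := i) (j := 1) (k := 0) hi (by norm_num) (by norm_num) (i+1)
  simp only [add_zero, sub_zero, add_sub_cancel_right, add_sub_cancel_left] at h
  push_cast at h
  linear_combination h / 2

lemma stepB (hGD : IsGD A1mul lie) : ∀ i : ℤ, (-1:ℤ) ≤ i →
    ff lie i 0 i = ff lie 1 0 1 * (i : ℂ) := by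
  have hbase : ff lie (-1) 0 (-1) = - ff lie 1 0 1 := by
    have h := stepBrec lie hGD (i := -1) (by norm_num)
    norm_num at h
    have hd := ff_diag lie hGD 0 0
    linear_combination hd - h
  refine Int.le_induction ?_ ?_
  · rw [hbase]; push_cast; ring
  · intro n hn ih
    rw [stepBrec lie hGD hn, ih]
    push_cast; ring

lemma hf0 (hGD : IsGD A1mul lie) {j : ℤ} (hj : (-1:ℤ) ≤ j) (n : ℤ) :
    ff lie j 0 n = if n = j then ff lie 1 0 1 * (j:ℂ) else 0 := by
  by_cases h : n = j
  · rw [if_pos h, h]; exact stepB lie hGD j hj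
  · rw [if_neg h]; exact stepA lie hGD hj n h

lemma keyshape (hGD : IsGD A1mul lie) {j k : ℤ} (hj : (-1:ℤ) ≤ j) (hk : (-1:ℤ) ≤ k) (m : ℤ) :
    ((j:ℂ) + (k:ℂ) + 1 - (m:ℂ)) * ff lie j k m
      = (if m = j + k then ff lie 1 0 1 * ((j:ℂ) - (k:ℂ)) else 0) := by
  have h := gdc lie hGD (i := 0) (j := j) (k := k) (by norm_num) hj hk m
  simp only [zero_add, sub_zero] at h
  have s1 : ff lie k j m = - ff lie j k m := ff_skew lie hGD k j m
  have e1 : ff lie 0 j (m-k) = (if m = j + k then -(ff lie 1 0 1 * (j:ℂ)) else 0) := by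
    rw [ff_skew lie hGD, hf0 lie hGD hj]
    by_cases h1 : m = j + k
    · rw [if_pos h1, if_pos (by omega)]
    · rw [if_neg h1, if_neg (by omega), neg_zero]
  have e2 : ff lie 0 k (m-j) = (if m = j + k then -(ff lie 1 0 1 * (k:ℂ)) else 0) := by
    rw [ff_skew lie hGD, hf0 lie hGD hk]
    by_cases h1 : m = j + k
    · rw [if_pos h1, if_pos (by omega)]
    · rw [if_neg h1, if_neg (by omega), neg_zero]
  by_cases hm : m = j + k
  · rw [if_pos hm]
    rw [if_pos hm] at e1 e2
    push_cast at h
    linear_combination h + ((k:ℂ)+1) * s1 - ((k:ℂ)+1) * e1 + ((j:ℂ)+1) * e2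
  · rw [if_neg hm]
    rw [if_neg hm] at e1 e2
    push_cast at h
    linear_combination h + ((k:ℂ)+1) * s1 - ((k:ℂ)+1) * e1 + ((j:ℂ)+1) * e2

lemma shape1 (hGD : IsGD A1mul lie) {j k : ℤ} (hj : (-1:ℤ) ≤ j) (hk : (-1:ℤ) ≤ k) :
    ff lie j k (j+k) = ff lie 1 0 1 * ((j:ℂ) - (k:ℂ)) := by
  have h := keyshape lie hGD hj hk (j+k)
  rw [if_pos rfl] at h
  push_cast at h
  linear_combination h

lemma shape0 (hGD : IsGD A1mul lie) {j k : ℤ} (hj : (-1:ℤ) ≤ j) (hk : (-1:ℤ) ≤ k)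
    {m : ℤ} (hm1 : m ≠ j + k) (hm2 : m ≠ j + k + 1) : ff lie j k m = 0 := by
  have h := keyshape lie hGD hj hk m
  rw [if_neg hm1] at h
  have hne : ((j:ℂ) + (k:ℂ) + 1 - (m:ℂ)) ≠ 0 := by
    have h2 : ((j + k + 1 - m : ℤ) : ℂ) ≠ 0 := Int.cast_ne_zero.mpr (by omega)
    intro hc
    apply h2
    push_cast
    linear_combination hc
  rcases mul_eq_zero.mp h with h' | h'
  · exact absurd h' hne
  · exact h'

lemma sigma_zero (hGD : IsGD A1mul lie) : ff lie 1 (-1) 1 = 0 := by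
  have h := gdc lie hGD (i := -1) (j := 1) (k := -1) (by norm_num) (by norm_num) (by norm_num) 0
  norm_num at h
  have h1 : ff lie 0 (-1) 0 = 0 := by
    rw [ff_skew lie hGD]
    rw [stepA lie hGD (by norm_num) 0 (by norm_num)]
    ring
  have h2 := ff_diag lie hGD (-1) (-1)
  linear_combination -h/2 + h1 - h2

lemma tD2rec (hGD : IsGD A1mul lie) {i : ℤ} (hi : (-1:ℤ) ≤ i) :
    ff lie (i+1) (-1) (i+1) = ff lie i (-1) i + ff lie 1 (-1) 1 := by
  have h := gdc lie hGD (i := i) (j := 1) (k := -1) hi (by norm_num) (by norm_num) (i+1)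
  rw [show i + 1 - 1 = i from by ring, show i + 1 - i = 1 from add_sub_cancel_left i 1] at h
  push_cast at h
  linear_combination h / 2

lemma tD2 (hGD : IsGD A1mul lie) : ∀ i : ℤ, (-1:ℤ) ≤ i → ff lie i (-1) i = 0 := by
  refine Int.le_induction ?_ ?_
  · exact ff_diag lie hGD (-1) (-1)
  · intro n hn ih
    rw [tD2rec lie hGD hn, ih, sigma_zero lie hGD]
    ring

lemma tD2' (hGD : IsGD A1mul lie) (k : ℤ) (hk : (-1:ℤ) ≤ k) : ff lie (-1) k k = 0 := by
  rw [ff_skew lie hGD, tD2 lie hGD k hk]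
  ring

lemma mainT (hGD : IsGD A1mul lie) : ∀ n : ℕ, ∀ j k : ℤ, (-1:ℤ) ≤ j → (-1:ℤ) ≤ k →
    (j + k + 2 : ℤ) ≤ (n : ℤ) → ff lie j k (j+k+1) = 0 := by
  intro n
  induction n with
  | zero =>
    intro j k hj hk hn
    have hj' : j = -1 := by omega
    have hk' : k = -1 := by omega
    subst hj'; subst hk'
    exact ff_diag lie hGD (-1) _
  | succ n ih =>
    intro j k hj hk hn
    by_cases hj1 : j = -1
    · subst hj1
      rw [show (-1:ℤ) + k + 1 = k from by ring]
      exact tD2' lie hGD k hk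
    by_cases hk1 : k = -1
    · subst hk1
      rw [show j + (-1:ℤ) + 1 = j from by ring]
      exact tD2 lie hGD j hj
    have h := gdc lie hGD (i := -1) (j := j) (k := k) (by norm_num) hj hk (j+k)
    rw [show (-1:ℤ) + j = j - 1 from by ring, show (-1:ℤ) + k = k - 1 from by ring,
        show j + k - k = j from by ring, show j + k - j = k from by ring,
        show j + k - (-1:ℤ) = j + k + 1 from by ring] at h
    have ih1 := ih (j-1) k (by omega) hk (by omega)
    rw [show j - 1 + k + 1 = j + k from by ring] at ih1
    have ih2 := ih (k-1) j (by omega) hj (by omega)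
    rw [show k - 1 + j + 1 = j + k from by ring] at ih2
    have z1 := tD2' lie hGD j hj
    have z2 := tD2' lie hGD k hk
    have key : ((j:ℂ) + (k:ℂ) + 2) * ff lie j k (j+k+1) = 0 := by
      push_cast at h
      linear_combination -h + ((j:ℂ)+1) * ih1 - ((k:ℂ)+1) * ih2 + ((k:ℂ)+1) * z1 - ((j:ℂ)+1) * z2
    have hne : ((j:ℂ) + (k:ℂ) + 2) ≠ 0 := by
      intro hc
      have h2 : ((j + k + 2 : ℤ) : ℂ) ≠ 0 := Int.cast_ne_zero.mpr (by omega)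
      apply h2
      push_cast
      linear_combination hc
    exact (mul_eq_zero.mp key).resolve_left hne

lemma tAll (hGD : IsGD A1mul lie) (j k : ℤ) (hj : (-1:ℤ) ≤ j) (hk : (-1:ℤ) ≤ k) :
    ff lie j k (j+k+1) = 0 :=
  mainT lie hGD (j+k+2).toNat j k hj hk (by omega)

end Main

end S11



/-- every Lie bracket making `(A₁,∘,[·,·])` a Gel'fand-Dorfman
bialgebra is of the form `[L_i, L_j] = c(i−j) L_{i+j}` for some `c ∈ ℂ`. -/
theorem stmt_11
    (lie : ({i : ℤ // (-1 : ℤ) ≤ i} →₀ ℂ) → ({i : ℤ // (-1 : ℤ) ≤ i} →₀ ℂ) →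
      ({i : ℤ // (-1 : ℤ) ≤ i} →₀ ℂ))
    (hGD : IsGD A1mul lie) :
    ∃ c : ℂ, ∀ i j : {i : ℤ // (-1 : ℤ) ≤ i},
      lie (Finsupp.single i 1) (Finsupp.single j 1)
        = (c * ((i.1 : ℂ) - (j.1 : ℂ))) • sL (i.1 + j.1) := by
  refine ⟨S11.ff lie 1 0 1, fun i j => ?_⟩
  have hsi : (Finsupp.single i (1:ℂ)) = sL i.1 := by rw [S11.sL_def i.2]
  have hsj : (Finsupp.single j (1:ℂ)) = sL j.1 := by rw [S11.sL_def j.2]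
  rw [hsi, hsj]
  apply S11.cf_ext
  intro m
  rw [S11.cf_smul, S11.cf_sL]
  change S11.ff lie i.1 j.1 m = _
  by_cases h1 : m = i.1 + j.1 + 1
  · rw [h1, S11.tAll lie hGD i.1 j.1 i.2 j.2, if_neg (by rintro ⟨hc, -⟩; omega)]
    ring
  by_cases h2 : m = i.1 + j.1
  · rw [h2]
    by_cases hm1 : (-1:ℤ) ≤ i.1 + j.1
    · rw [if_pos ⟨rfl, hm1⟩, S11.shape1 lie hGD i.2 j.2]
      ring
    · rw [S11.ff_botm lie hm1, if_neg (by rintro ⟨-, hc⟩; exact hm1 hc)]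
      ring
  · rw [S11.shape0 lie hGD i.2 j.2 h2 h1, if_neg (by rintro ⟨hc, -⟩; exact h2 hc.symm)]
    ring
end
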